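/- arXiv:1903.03211 — 6 statements merged into one kernel-verified Lean document; each statement's English description precedes it below -/
import Mathlib

section
/- There is an absolute constant C > 0 such that for all integers d, k, m ≥ 1 the following holds. Consider the range space whose ground set is the set of m-tuples of points of Euclidean space ℝ^d, and whose ranges are all metric balls under the Hausdorff distance with centers of complexity k, i.e. all sets { s : Fin m → ℝ^d | d_H({s₁,…,s_m}, {q₁,…,q_k}) ≤ r } over all tuples q : Fin k → ℝ^d and radii r > 0, where d_H is the Hausdorff distance between the finite sets of entries. Then every finite subset of the ground set that is shattered by this family of ranges has cardinality at most C · d · k · (1 + log(d·k·m)). In particular the VC dimension of this range space is O(d·k·log(d·k·m)). -/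
open scoped Classical

/-- Characterization of Hausdorff distance between ranges of finite tuples. -/
lemma haus_le_iff {E : Type*} [MetricSpace E] {m k : ℕ} (hm : 0 < m) (hk : 0 < k)
    (s : Fin m → E) (q : Fin k → E) {r : ℝ} (hr : 0 ≤ r) :
    Metric.hausdorffDist (Set.range s) (Set.range q) ≤ r ↔
      ((∀ i, ∃ j, dist (s i) (q j) ≤ r) ∧ (∀ j, ∃ i, dist (s i) (q j) ≤ r)) := by
  have hM : Nonempty (Fin m) := ⟨⟨0, hm⟩⟩
  have hK : Nonempty (Fin k) := ⟨⟨0, hk⟩⟩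
  have hne : EMetric.hausdorffEdist (Set.range s) (Set.range q) ≠ ⊤ :=
    Metric.hausdorffEdist_ne_top_of_nonempty_of_bounded (Set.range_nonempty _)
      (Set.range_nonempty _) (Set.finite_range _).isBounded (Set.finite_range _).isBounded
  constructor
  · intro h
    constructor
    · intro i
      have h1 : Metric.infDist (s i) (Set.range q) ≤ r :=
        le_trans (Metric.infDist_le_hausdorffDist_of_mem (Set.mem_range_self i) hne) h
      obtain ⟨y, hy, hyd⟩ := (Set.finite_range q).isCompact.exists_infDist_eq_dist
        (Set.range_nonempty _) (s i)
      obtain ⟨j, rfl⟩ := hy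
      exact ⟨j, by rw [← hyd]; exact h1⟩
    · intro j
      have h1 : Metric.infDist (q j) (Set.range s) ≤ r := by
        refine le_trans (Metric.infDist_le_hausdorffDist_of_mem (Set.mem_range_self j) ?_) ?_
        · rwa [EMetric.hausdorffEdist_comm]
        · rwa [Metric.hausdorffDist_comm]
      obtain ⟨y, hy, hyd⟩ := (Set.finite_range s).isCompact.exists_infDist_eq_dist
        (Set.range_nonempty _) (q j)
      obtain ⟨i, rfl⟩ := hy
      exact ⟨i, by rw [dist_comm, ← hyd]; exact h1⟩
  · rintro ⟨h1, h2⟩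
    refine Metric.hausdorffDist_le_of_mem_dist hr ?_ ?_
    · rintro x ⟨i, rfl⟩
      obtain ⟨j, hj⟩ := h1 i
      exact ⟨q j, Set.mem_range_self j, hj⟩
    · rintro y ⟨j, rfl⟩
      obtain ⟨i, hi⟩ := h2 j
      exact ⟨s i, Set.mem_range_self i, by rwa [dist_comm]⟩

/-- Finsets shattered by traces of balls on `P ⊆ ℝ^d` have at most `d+2` elements. -/
lemma ball_shattered_card_le {d : ℕ} (P : Finset (EuclideanSpace ℝ (Fin d)))
    (𝒜 : Finset (Finset (EuclideanSpace ℝ (Fin d))))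
    (h𝒜 : ∀ u ∈ 𝒜, ∃ (q : EuclideanSpace ℝ (Fin d)) (r : ℝ), 0 < r ∧
      u = P.filter (fun p => dist p q ≤ r))
    (s : Finset (EuclideanSpace ℝ (Fin d))) (hs : 𝒜.Shatters s) : s.card ≤ d + 2 := by
  by_contra hcard
  push_neg at hcard
  obtain ⟨s', hsub, hcard'⟩ := s.exists_subset_card_eq (n := d + 3) (by omega)
  have hs' : 𝒜.Shatters s' := hs.mono_right hsub
  -- s' is contained in P
  have hs'P : ↑s' ⊆ (P : Set (EuclideanSpace ℝ (Fin d))) := by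
    obtain ⟨u, hu, hsu⟩ := hs'.exists_superset
    obtain ⟨q, r, hr, rfl⟩ := h𝒜 u hu
    intro p hp
    exact Finset.mem_coe.2 (Finset.mem_of_mem_filter p (hsu hp))
  -- enumerate s'
  have e : { x // x ∈ s' } ≃ Fin (d + 3) := s'.equivFinOfCardEq hcard'
  set x : Fin (d + 3) → EuclideanSpace ℝ (Fin d) := fun j => (e.symm j : _) with hx
  have hxinj : Function.Injective x := fun a b hab => by
    have := Subtype.coe_injective hab
    exact e.symm.injective this
  have hxs : ∀ j, x j ∈ s' := fun j => (e.symm j).2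
  -- the lifted vectors
  set lift : EuclideanSpace ℝ (Fin d) → (Fin (d + 2) → ℝ) :=
    fun p => Fin.snoc (Fin.snoc (fun i => p i) (∑ i, p i ^ 2)) 1 with hlift
  have hLI : ¬ LinearIndependent ℝ (fun j => lift (x j)) := by
    intro h
    have := h.fintype_card_le_finrank
    simp [Module.finrank_fin_fun] at this
  obtain ⟨g, hg0, j₀, hj₀⟩ := Fintype.not_linearIndependent_iff.mp hLI
  have hcoord : ∀ c : Fin (d + 2), ∑ j, g j * lift (x j) c = 0 := by
    intro c
    have := congrFun hg0 c
    simpa [Finset.sum_apply] using this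
  have hsum1 : ∑ j, g j = 0 := by
    have := hcoord (Fin.last (d + 1))
    simpa [hlift, Fin.snoc_last] using this
  -- positive and negative parts
  have hexpos : ∃ j, 0 < g j := by
    by_contra h
    push_neg at h
    have := (Finset.sum_eq_zero_iff_of_nonpos (fun j _ => h j)).1 hsum1
    exact hj₀ (this j₀ (Finset.mem_univ _))
  have hexneg : ∃ j, g j < 0 := by
    by_contra h
    push_neg at h
    have := (Finset.sum_eq_zero_iff_of_nonneg (fun j _ => h j)).1 hsum1
    exact hj₀ (this j₀ (Finset.mem_univ _))
  -- the shattered subset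
  set t : Finset (EuclideanSpace ℝ (Fin d)) :=
    (Finset.univ.filter (fun j => 0 < g j)).image x with ht
  have hts : t ⊆ s' := by
    intro p hp
    obtain ⟨j, _, rfl⟩ := Finset.mem_image.1 hp
    exact hxs j
  obtain ⟨u, hu𝒜, hsu⟩ := hs' hts
  obtain ⟨q, r, hr, rfl⟩ := h𝒜 u hu𝒜
  set f : EuclideanSpace ℝ (Fin d) → ℝ := fun p => (∑ i, (p i - q i) ^ 2) - r ^ 2 with hf
  -- membership in the ball is a sign condition on f
  have hmemf : ∀ p : EuclideanSpace ℝ (Fin d), (dist p q ≤ r ↔ f p ≤ 0) := by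
    intro p
    rw [EuclideanSpace.dist_eq, Real.sqrt_le_iff]
    constructor
    · rintro ⟨-, h2⟩
      simp only [hf, sub_nonpos]
      calc (∑ i, (p i - q i) ^ 2) = ∑ i, dist (p i) (q i) ^ 2 := by
            refine Finset.sum_congr rfl fun i _ => ?_
            rw [Real.dist_eq, sq_abs]
        _ ≤ r ^ 2 := h2
    · intro h
      refine ⟨le_of_lt hr, ?_⟩
      calc (∑ i, dist (p i) (q i) ^ 2) = ∑ i, (p i - q i) ^ 2 := by
            refine Finset.sum_congr rfl fun i _ => ?_
            rw [Real.dist_eq, sq_abs]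
        _ ≤ r ^ 2 := by simpa [hf, sub_nonpos] using h
  -- linear expansion of f in terms of lift
  set coeff : Fin (d + 2) → ℝ :=
    Fin.snoc (Fin.snoc (fun i => -2 * q i) 1) ((∑ i, q i ^ 2) - r ^ 2) with hcoeff
  have hfid : ∀ p : EuclideanSpace ℝ (Fin d), f p = ∑ c, coeff c * lift p c := by
    intro p
    rw [Fin.sum_univ_castSucc, Fin.sum_univ_castSucc]
    simp only [hcoeff, hlift, Fin.snoc_castSucc, Fin.snoc_last]
    have : ∑ i, (p i - q i) ^ 2 = ∑ i, ((-2 * q i) * p i + (p i ^ 2 + q i ^ 2)) :=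
      Finset.sum_congr rfl fun i _ => by ring
    simp only [hf, this, Finset.sum_add_distrib]
    ring
  -- the weighted sum is zero
  have hzero : ∑ j, g j * f (x j) = 0 := by
    calc ∑ j, g j * f (x j) = ∑ j, ∑ c, coeff c * (g j * lift (x j) c) := by
          refine Finset.sum_congr rfl fun j _ => ?_
          rw [hfid, Finset.mul_sum]
          exact Finset.sum_congr rfl fun c _ => by ring
      _ = ∑ c, coeff c * ∑ j, g j * lift (x j) c := by
          rw [Finset.sum_comm]
          exact Finset.sum_congr rfl fun c _ => by rw [Finset.mul_sum]
      _ = 0 := by simp [hcoord]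
  -- but each term is nonpositive, and at least one is negative
  have hterm : ∀ j, g j * f (x j) ≤ 0 := by
    intro j
    rcases lt_trichotomy (g j) 0 with hgj | hgj | hgj
    · -- g j < 0 : x j ∉ t hence x j ∉ u hence f (x j) > 0
      have hxt : x j ∉ t := by
        intro hmem
        obtain ⟨j', hj', hj'eq⟩ := Finset.mem_image.1 hmem
        have := hxinj hj'eq
        rw [this] at hj'
        exact absurd (Finset.mem_filter.1 hj').2 (not_lt.2 hgj.le)
      have hxu : x j ∉ P.filter (fun p => dist p q ≤ r) := by
        intro hmem
        exact hxt (hsu ▸ Finset.mem_inter.2 ⟨hxs j, hmem⟩)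
      have hfx : 0 < f (x j) := by
        by_contra hle
        push_neg at hle
        refine hxu (Finset.mem_filter.2 ⟨?_, (hmemf (x j)).2 hle⟩)
        exact hs'P (hxs j)
      exact le_of_lt (mul_neg_of_neg_of_pos hgj hfx)
    · simp [hgj]
    · -- 0 < g j : x j ∈ t hence x j ∈ u hence f (x j) ≤ 0
      have hxt : x j ∈ t := Finset.mem_image.2 ⟨j, Finset.mem_filter.2 ⟨Finset.mem_univ _, hgj⟩, rfl⟩
      have hxu : x j ∈ P.filter (fun p => dist p q ≤ r) := (Finset.mem_inter.1 (hsu ▸ hxt)).2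
      have hfx : f (x j) ≤ 0 := (hmemf (x j)).1 (Finset.mem_filter.1 hxu).2
      exact mul_nonpos_of_nonneg_of_nonpos hgj.le hfx
  obtain ⟨j₁, hj₁⟩ := hexneg
  have hstrict : g j₁ * f (x j₁) < 0 := by
    have hxt : x j₁ ∉ t := by
      intro hmem
      obtain ⟨j', hj', hj'eq⟩ := Finset.mem_image.1 hmem
      have := hxinj hj'eq
      rw [this] at hj'
      exact absurd (Finset.mem_filter.1 hj').2 (not_lt.2 hj₁.le)
    have hxu : x j₁ ∉ P.filter (fun p => dist p q ≤ r) := by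
      intro hmem
      exact hxt (hsu ▸ Finset.mem_inter.2 ⟨hxs j₁, hmem⟩)
    have hfx : 0 < f (x j₁) := by
      by_contra hle
      push_neg at hle
      refine hxu (Finset.mem_filter.2 ⟨?_, (hmemf (x j₁)).2 hle⟩)
      exact hs'P (hxs j₁)
    exact mul_neg_of_neg_of_pos hj₁ hfx
  have : (∑ j, g j * f (x j)) < 0 := by
    have := Finset.sum_lt_sum (fun j (_ : j ∈ Finset.univ) => hterm j)
      ⟨j₁, Finset.mem_univ _, by simpa using hstrict⟩
    simpa using this
  rw [hzero] at this
  exact lt_irrefl 0 this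

lemma card_le_pow_of_shatter {α : Type*} [DecidableEq α] (P : Finset α)
    (𝒜 : Finset (Finset α)) (D : ℕ)
    (hP : ∀ u ∈ 𝒜, u ⊆ P) (hVC : ∀ s, 𝒜.Shatters s → s.card ≤ D) :
    𝒜.card ≤ (P.card + 1) ^ D := by
  calc 𝒜.card ≤ 𝒜.shatterer.card := Finset.card_le_card_shatterer 𝒜
    _ ≤ ((Finset.range (D + 1)).biUnion (fun i => P.powersetCard i)).card := by
        refine Finset.card_le_card ?_
        intro s hs
        have hsh : 𝒜.Shatters s := Finset.mem_shatterer.1 hs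
        have hsP : s ⊆ P := by
          obtain ⟨u, hu, hsu⟩ := hsh.exists_superset
          exact hsu.trans (hP u hu)
        refine Finset.mem_biUnion.2 ⟨s.card, Finset.mem_range.2 ?_, ?_⟩
        · exact Nat.lt_succ_of_le (hVC s hsh)
        · exact Finset.mem_powersetCard.2 ⟨hsP, rfl⟩
    _ ≤ ∑ i ∈ Finset.range (D + 1), (P.powersetCard i).card := Finset.card_biUnion_le
    _ = ∑ i ∈ Finset.range (D + 1), P.card.choose i := by
        simp [Finset.card_powersetCard]
    _ ≤ ∑ i ∈ Finset.range (D + 1), P.card ^ i * D.choose i := by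
        refine Finset.sum_le_sum fun i hi => ?_
        have h1 : P.card.choose i ≤ P.card ^ i := Nat.choose_le_pow _ _
        have h2 : 0 < D.choose i := Nat.choose_pos (Nat.lt_succ_iff.1 (Finset.mem_range.1 hi))
        calc P.card.choose i ≤ P.card ^ i := h1
          _ ≤ P.card ^ i * D.choose i := Nat.le_mul_of_pos_right _ h2
    _ = (P.card + 1) ^ D := by
        rw [add_pow]
        simp

lemma arith_final (d k m n : ℕ) (hd : 1 ≤ d) (hk : 1 ≤ k) (hm : 1 ≤ m)
    (key : 2 ^ n ≤ ((n * m + 1) ^ (d + 2)) ^ k) :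
    (n : ℝ) ≤ 100 * d * k * (1 + Real.log ((d : ℝ) * k * m)) := by
  set D : ℝ := (d : ℝ) with hD
  set K : ℝ := (k : ℝ) with hK
  set M : ℝ := (m : ℝ) with hM
  have hD1 : (1 : ℝ) ≤ D := by rw [hD]; exact_mod_cast hd
  have hK1 : (1 : ℝ) ≤ K := by rw [hK]; exact_mod_cast hk
  have hM1 : (1 : ℝ) ≤ M := by rw [hM]; exact_mod_cast hm
  have hlogD : 0 ≤ Real.log D := Real.log_nonneg hD1
  have hlogK : 0 ≤ Real.log K := Real.log_nonneg hK1
  have hlogM : 0 ≤ Real.log M := Real.log_nonneg hM1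
  have hlogDKM : Real.log (D * K * M) = Real.log D + Real.log K + Real.log M := by
    rw [Real.log_mul (by positivity) (by positivity),
      Real.log_mul (by positivity) (by positivity)]
  rcases Nat.eq_zero_or_pos n with hn0 | hn
  · rw [hn0]
    push_cast
    nlinarith [mul_nonneg (mul_nonneg (by linarith : (0:ℝ) ≤ D) (by linarith : (0:ℝ) ≤ K))
      (by rw [hlogDKM]; linarith : (0:ℝ) ≤ 1 + Real.log (D * K * M))]
  have hN1 : (1 : ℝ) ≤ (n : ℝ) := by exact_mod_cast hn
  set N : ℝ := (n : ℝ) with hNdef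
  -- the key inequality, in real logarithms
  have key2 : (2 : ℝ) ^ n ≤ (N * M + 1) ^ ((d + 2) * k) := by
    rw [← pow_mul] at key
    have := (Nat.cast_le (α := ℝ)).2 key
    push_cast at this
    convert this using 2
  have key3 : N * Real.log 2 ≤ ((D + 2) * K) * Real.log (N * M + 1) := by
    have h := Real.log_le_log (by positivity) key2
    rw [Real.log_pow, Real.log_pow] at h
    push_cast at h
    linarith
  have hlog2 : (0.6931471803 : ℝ) < Real.log 2 := Real.log_two_gt_d9
  have hlog2pos : (0 : ℝ) < Real.log 2 := by linarith
  have hlogNM1 : 0 ≤ Real.log (N * M + 1) := Real.log_nonneg (by nlinarith)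
  -- (D+2)K ≤ 5 D K log 2
  have l3 : (D + 2) * K ≤ 5 * D * K * Real.log 2 := by nlinarith [mul_pos (by linarith : (0:ℝ) < D) (by linarith : (0:ℝ) < K)]
  have c1 : N * Real.log 2 ≤ (5 * D * K * Real.log (N * M + 1)) * Real.log 2 := by
    calc N * Real.log 2 ≤ ((D + 2) * K) * Real.log (N * M + 1) := key3
      _ ≤ (5 * D * K * Real.log 2) * Real.log (N * M + 1) :=
          mul_le_mul_of_nonneg_right l3 hlogNM1
      _ = (5 * D * K * Real.log (N * M + 1)) * Real.log 2 := by ring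
  have c2 : N ≤ 5 * D * K * Real.log (N * M + 1) := le_of_mul_le_mul_right c1 hlog2pos
  -- log (NM+1) ≤ log 2 + log N + log M
  have l1 : Real.log (N * M + 1) ≤ Real.log 2 + Real.log N + Real.log M := by
    have h1 : N * M + 1 ≤ 2 * N * M := by nlinarith
    have h2 := Real.log_le_log (by positivity) h1
    rwa [Real.log_mul (by positivity) (by positivity),
      Real.log_mul (by positivity) (by positivity)] at h2
  -- log N ≤ N/(10DK) + log (10DK)
  have hb : (0 : ℝ) < 10 * D * K := by positivity
  have l2 : Real.log N ≤ N / (10 * D * K) + Real.log (10 * D * K) := by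
    have h1 : Real.log (N / (10 * D * K)) ≤ N / (10 * D * K) := by
      have := Real.log_le_sub_one_of_pos (show (0:ℝ) < N / (10 * D * K) by positivity)
      linarith
    have h2 : Real.log N = Real.log (N / (10 * D * K)) + Real.log (10 * D * K) := by
      rw [← Real.log_mul (by positivity) (by positivity), div_mul_cancel₀ _ hb.ne']
    linarith
  have c3 : N ≤ 5 * D * K * (Real.log 2 + (N / (10 * D * K) + Real.log (10 * D * K)) + Real.log M) := by
    calc N ≤ 5 * D * K * Real.log (N * M + 1) := c2
      _ ≤ 5 * D * K * (Real.log 2 + Real.log N + Real.log M) :=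
          mul_le_mul_of_nonneg_left l1 (by positivity)
      _ ≤ _ := mul_le_mul_of_nonneg_left (by linarith) (by positivity)
  have hsimp : 5 * D * K * (N / (10 * D * K)) = N / 2 := by
    field_simp
    ring
  have c4 : N / 2 ≤ 5 * D * K * (Real.log 2 + Real.log (10 * D * K) + Real.log M) := by
    have expand : 5 * D * K * (Real.log 2 + (N / (10 * D * K) + Real.log (10 * D * K)) + Real.log M)
        = 5 * D * K * (Real.log 2 + Real.log (10 * D * K) + Real.log M) + 5 * D * K * (N / (10 * D * K)) := by
      ring
    rw [expand, hsimp] at c3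
    linarith
  have hlog10 : Real.log (10 * D * K) = Real.log 10 + Real.log D + Real.log K := by
    rw [Real.log_mul (by positivity) (by positivity),
      Real.log_mul (by positivity) (by positivity)]
  have c5 : N ≤ 10 * D * K * (Real.log 2 + Real.log 10 + Real.log D + Real.log K + Real.log M) := by
    rw [hlog10] at c4
    linarith
  have hl2le : Real.log 2 ≤ 1 := by
    have := Real.log_le_sub_one_of_pos (show (0:ℝ) < 2 by norm_num); linarith
  have hl10le : Real.log 10 ≤ 9 := by
    have := Real.log_le_sub_one_of_pos (show (0:ℝ) < 10 by norm_num); linarith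
  have c6 : N ≤ 10 * D * K * (10 + (Real.log D + Real.log K + Real.log M)) := by
    calc N ≤ 10 * D * K * (Real.log 2 + Real.log 10 + Real.log D + Real.log K + Real.log M) := c5
      _ ≤ 10 * D * K * (10 + (Real.log D + Real.log K + Real.log M)) :=
          mul_le_mul_of_nonneg_left (by linarith) (by positivity)
  have c7 : 10 * D * K * (10 + (Real.log D + Real.log K + Real.log M))
      ≤ 100 * D * K * (1 + (Real.log D + Real.log K + Real.log M)) := by
    have h1 : 10 + (Real.log D + Real.log K + Real.log M)
        ≤ 10 * (1 + (Real.log D + Real.log K + Real.log M)) := by linarith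
    have h2 := mul_le_mul_of_nonneg_left h1 (show (0:ℝ) ≤ 10 * D * K by positivity)
    linarith [h2]
  rw [hlogDKM]
  linarith

/-- A finite set `Y` is shattered by the family of ranges `R` if every subset of `Y`
can be realized as the intersection of `Y` with some range in `R`. -/
def Shatters {X : Type*} (R : Set (Set X)) (Y : Finset X) : Prop :=
  ∀ A ⊆ Y, ∃ B ∈ R, ∀ y ∈ Y, y ∈ B ↔ y ∈ A

/-- VC dimension of Hausdorff-distance metric balls on `m`-tuples of points of `ℝ^d`,
with centers of complexity `k`, is `O(d k log (d k m))`. -/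
theorem vc_hausdorff_discrete_upper :
    ∃ C : ℝ, 0 < C ∧ ∀ d k m : ℕ, 1 ≤ d → 1 ≤ k → 1 ≤ m →
      ∀ Y : Finset (Fin m → EuclideanSpace ℝ (Fin d)),
        Shatters {B | ∃ (q : Fin k → EuclideanSpace ℝ (Fin d)) (r : ℝ), 0 < r ∧
            B = {s | Metric.hausdorffDist (Set.range s) (Set.range q) ≤ r}} Y →
        (Y.card : ℝ) ≤ C * d * k * (1 + Real.log ((d : ℝ) * k * m)) := by
  refine ⟨100, by norm_num, ?_⟩
  intro d k m hd hk hm Y hY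
  -- the set of all coordinates of members of Y
  set P : Finset (EuclideanSpace ℝ (Fin d)) :=
    Y.biUnion (fun y => Finset.image y Finset.univ) with hP
  have hPmem : ∀ y ∈ Y, ∀ i, y i ∈ P := by
    intro y hy i
    exact Finset.mem_biUnion.2 ⟨y, hy, Finset.mem_image.2 ⟨i, Finset.mem_univ _, rfl⟩⟩
  have hPcard : P.card ≤ Y.card * m := by
    refine le_trans Finset.card_biUnion_le ?_
    calc ∑ y ∈ Y, (Finset.image y Finset.univ).card
        ≤ ∑ y ∈ Y, m := by
          refine Finset.sum_le_sum fun y _ => ?_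
          calc (Finset.image y Finset.univ).card ≤ Finset.univ.card :=
                Finset.card_image_le
            _ = m := by simp
      _ = Y.card * m := by rw [Finset.sum_const, smul_eq_mul]
  -- the family of ball traces on P
  set 𝒜 : Finset (Finset (EuclideanSpace ℝ (Fin d))) :=
    P.powerset.filter (fun u => ∃ (q : EuclideanSpace ℝ (Fin d)) (r : ℝ), 0 < r ∧
      u = P.filter (fun p => dist p q ≤ r)) with h𝒜
  have h𝒜P : ∀ u ∈ 𝒜, u ⊆ P := fun u hu =>
    Finset.mem_powerset.1 (Finset.mem_filter.1 hu).1
  have h𝒜w : ∀ u ∈ 𝒜, ∃ (q : EuclideanSpace ℝ (Fin d)) (r : ℝ), 0 < r ∧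
      u = P.filter (fun p => dist p q ≤ r) := fun u hu => (Finset.mem_filter.1 hu).2
  -- choose witnesses for the shattering
  have hY' : ∀ A : Finset (Fin m → EuclideanSpace ℝ (Fin d)), A ⊆ Y →
      ∃ (q : Fin k → EuclideanSpace ℝ (Fin d)) (r : ℝ), 0 < r ∧
        ∀ y ∈ Y, (y ∈ A ↔ Metric.hausdorffDist (Set.range y) (Set.range q) ≤ r) := by
    intro A hA
    obtain ⟨B, hB, hBA⟩ := hY A hA
    obtain ⟨q, r, hr, rfl⟩ := hB
    exact ⟨q, r, hr, fun y hy => by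
      have := (hBA y hy).symm
      simpa [Set.mem_setOf_eq] using this⟩
  choose! q r hr hmem using hY'
  -- the encoding map
  set Φ : Finset (Fin m → EuclideanSpace ℝ (Fin d)) →
      (Fin k → Finset (EuclideanSpace ℝ (Fin d))) :=
    fun A j => P.filter (fun p => dist p (q A j) ≤ r A) with hΦ
  -- membership recovery
  have hrec : ∀ A ⊆ Y, ∀ y ∈ Y,
      (y ∈ A ↔ ((∀ i, ∃ j, y i ∈ Φ A j) ∧ (∀ j, ∃ i, y i ∈ Φ A j))) := by
    intro A hA y hy
    rw [hmem A hA y hy, haus_le_iff hm hk y (q A) (hr A hA).le]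
    have hiff : ∀ i j, (dist (y i) (q A j) ≤ r A ↔ y i ∈ Φ A j) := by
      intro i j
      constructor
      · intro h
        exact Finset.mem_filter.2 ⟨hPmem y hy i, h⟩
      · intro h
        exact (Finset.mem_filter.1 h).2
    constructor
    · rintro ⟨h1, h2⟩
      exact ⟨fun i => (h1 i).imp (fun j => (hiff i j).1),
        fun j => (h2 j).imp (fun i => (hiff i j).1)⟩
    · rintro ⟨h1, h2⟩
      exact ⟨fun i => (h1 i).imp (fun j => (hiff i j).2),
        fun j => (h2 j).imp (fun i => (hiff i j).2)⟩
  -- counting: injection from the powerset of Y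
  have hcount : Y.powerset.card ≤ (Fintype.piFinset (fun _ : Fin k => 𝒜)).card := by
    refine Finset.card_le_card_of_injOn Φ ?_ ?_
    · intro A hA
      have hAY : A ⊆ Y := Finset.mem_powerset.1 hA
      refine Fintype.mem_piFinset.2 fun j => ?_
      refine Finset.mem_filter.2 ⟨Finset.mem_powerset.2 (Finset.filter_subset _ _), ?_⟩
      exact ⟨q A j, r A, hr A hAY, rfl⟩
    · intro A hA A' hA' hEq
      have hAY : A ⊆ Y := Finset.mem_powerset.1 (Finset.mem_coe.1 hA)
      have hAY' : A' ⊆ Y := Finset.mem_powerset.1 (Finset.mem_coe.1 hA')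
      apply Finset.Subset.antisymm
      · intro y hyA
        have hy : y ∈ Y := hAY hyA
        have h1 := (hrec A hAY y hy).1 hyA
        rw [hEq] at h1
        exact (hrec A' hAY' y hy).2 h1
      · intro y hyA
        have hy : y ∈ Y := hAY' hyA
        have h1 := (hrec A' hAY' y hy).1 hyA
        rw [← hEq] at h1
        exact (hrec A hAY y hy).2 h1
  -- convert counts
  have hcount2 : 2 ^ Y.card ≤ 𝒜.card ^ k := by
    calc 2 ^ Y.card = Y.powerset.card := (Finset.card_powerset Y).symm
      _ ≤ (Fintype.piFinset (fun _ : Fin k => 𝒜)).card := hcount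
      _ = 𝒜.card ^ k := by
        rw [Fintype.card_piFinset]
        simp
  have h𝒜card : 𝒜.card ≤ (P.card + 1) ^ (d + 2) :=
    card_le_pow_of_shatter P 𝒜 (d + 2) h𝒜P
      (fun s hs => ball_shattered_card_le P 𝒜 h𝒜w s hs)
  have key : 2 ^ Y.card ≤ ((Y.card * m + 1) ^ (d + 2)) ^ k := by
    calc 2 ^ Y.card ≤ 𝒜.card ^ k := hcount2
      _ ≤ ((P.card + 1) ^ (d + 2)) ^ k :=
          Nat.pow_le_pow_left h𝒜card k
      _ ≤ ((Y.card * m + 1) ^ (d + 2)) ^ k := by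
          refine Nat.pow_le_pow_left (Nat.pow_le_pow_left ?_ _) _
          omega
  exact arith_final d k m Y.card hd hk hm key
end

section
/- There is an absolute constant C > 0 such that for all integers d, k, m ≥ 1 the following holds. Consider the range space whose ground set is the set of m-tuples of points of Euclidean space ℝ^d (viewed as point sequences), and whose ranges are all metric balls under the discrete Fréchet distance with centers of complexity k, i.e. all sets { s : Fin m → ℝ^d | d_dF(q, s) ≤ r } over all tuples q : Fin k → ℝ^d and radii r > 0. Then every finite subset of the ground set that is shattered by this family of ranges has cardinality at most C · d · k · (1 + log(d·k·m)). In particular the VC dimension of this range space is O(d·k·log(d·k·m)). -/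
/-- One step of a traversal: each index advances by 0 or 1, and at least one advances. -/
def TravStep {k m : ℕ} (a b : Fin k × Fin m) : Prop :=
  ((b.1 : ℕ) = (a.1 : ℕ) ∨ (b.1 : ℕ) = (a.1 : ℕ) + 1) ∧
  ((b.2 : ℕ) = (a.2 : ℕ) ∨ (b.2 : ℕ) = (a.2 : ℕ) + 1) ∧
  (a.1 : ℕ) + (a.2 : ℕ) < (b.1 : ℕ) + (b.2 : ℕ)

/-- A traversal of the index grid `{1,…,k} × {1,…,m}` (written 0-indexed): it starts at the
pair of first indices, ends at the pair of last indices, and each consecutive pair of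
entries is a valid traversal step. -/
def IsTraversal {k m : ℕ} (T : List (Fin k × Fin m)) : Prop :=
  (∃ a ∈ T.head?, (a.1 : ℕ) = 0 ∧ (a.2 : ℕ) = 0) ∧
  (∃ b ∈ T.getLast?, (b.1 : ℕ) = k - 1 ∧ (b.2 : ℕ) = m - 1) ∧
  T.Chain' TravStep

/-- The discrete Fréchet distance: the minimum over all traversals of the maximum
distance between paired points. -/
noncomputable def discreteFrechetDist {d k m : ℕ}
    (q : Fin k → EuclideanSpace ℝ (Fin d)) (s : Fin m → EuclideanSpace ℝ (Fin d)) : ℝ :=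
  sInf {x | ∃ T : List (Fin k × Fin m), IsTraversal T ∧
    x = (T.map fun p => dist (q p.1) (s p.2)).foldr max 0}

/-!
The ball of centre `q` and radius `r` contains `y` iff some traversal pairs only points at distance
at most `r`, so whether it contains `y ∈ Y` depends only on which of the `k m |Y|` inequalities
`‖q i - y j‖ ≤ r` hold. Each of them says that a linear functional attached to `(q, r)` is
nonpositive at a point of `ℝ^(k(d+1)+2)` attached to `(i, y j)`. Homogeneous halfspaces of `ℝ^D`
shatter at most `D` points, so by Sauer–Shelah at most `(k m |Y| + 1)^(k(d+1)+2)` such patterns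
occur. Shattering `Y` requires `2^|Y|` of them, and solving for `|Y|` gives the bound.
-/

open Finset Module

namespace List

variable {α : Type*} [LinearOrder α]

theorem foldr_max_le_iff {l : List α} {b a : α} :
    l.foldr max b ≤ a ↔ b ≤ a ∧ ∀ x ∈ l, x ≤ a := by
  induction l with
  | nil => simp
  | cons y l ih => simp only [foldr_cons, max_le_iff, ih, forall_mem_cons]; tauto

theorem foldr_max_eq_or_mem (l : List α) (b : α) : l.foldr max b = b ∨ l.foldr max b ∈ l := by
  induction l with
  | nil => simp
  | cons y l ih =>
    rw [foldr_cons, mem_cons]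
    rcases max_choice y (l.foldr max b) with h | h <;> rw [h] <;> tauto

end List

theorem exists_isTraversal {k m : ℕ} (hk : 0 < k) (hm : 0 < m) :
    ∃ T : List (Fin k × Fin m), IsTraversal T := by
  obtain ⟨k, rfl⟩ := Nat.exists_eq_add_one_of_ne_zero hk.ne'
  obtain ⟨m, rfl⟩ := Nat.exists_eq_add_one_of_ne_zero hm.ne'
  have along_first :
      ∀ i : Fin (k + 1), Relation.ReflTransGen TravStep (0, 0) (i, (0 : Fin (m + 1))) := by
    intro i
    induction i using Fin.induction with
    | zero => rfl
    | succ i ih => exact ih.tail ⟨Or.inr (by simp), Or.inl rfl, by simp⟩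
  have along_last :
      ∀ j : Fin (m + 1), Relation.ReflTransGen TravStep (0, 0) (Fin.last k, j) := by
    intro j
    induction j using Fin.induction with
    | zero => exact along_first _
    | succ j ih => exact ih.tail ⟨Or.inl rfl, Or.inr (by simp), by simp⟩
  obtain ⟨l, hl, hlast⟩ :=
    List.exists_isChain_cons_of_relationReflTransGen (along_last (Fin.last m))
  refine ⟨(0, 0) :: l, ⟨_, rfl, rfl, rfl⟩, ⟨(Fin.last k, Fin.last m), ?_, by simp⟩, hl⟩
  rw [List.getLast?_eq_some_getLast (List.cons_ne_nil _ _), hlast]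
  rfl

theorem discreteFrechetDist_le_iff {d k m : ℕ} (hk : 0 < k) (hm : 0 < m)
    (q : Fin k → EuclideanSpace ℝ (Fin d)) (s : Fin m → EuclideanSpace ℝ (Fin d)) {r : ℝ}
    (hr : 0 ≤ r) :
    discreteFrechetDist q s ≤ r ↔
      ∃ T : List (Fin k × Fin m), IsTraversal T ∧ ∀ p ∈ T, dist (q p.1) (s p.2) ≤ r := by
  set f : Fin k × Fin m → ℝ := fun p => dist (q p.1) (s p.2)
  set S := {x | ∃ T : List (Fin k × Fin m), IsTraversal T ∧ x = (T.map f).foldr max 0}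
  have hfin : S.Finite := ((Set.finite_range f).insert 0).subset <| by
    rintro _ ⟨T, -, rfl⟩
    rcases List.foldr_max_eq_or_mem (T.map f) 0 with h | h
    · exact Or.inl h
    · obtain ⟨p, -, hp⟩ := List.mem_map.1 h
      exact Or.inr ⟨p, hp⟩
  have hne : S.Nonempty :=
    let ⟨T, hT⟩ := exists_isTraversal hk hm
    ⟨_, T, hT, rfl⟩
  have hle : sInf S ≤ r ↔ ∃ x ∈ S, x ≤ r :=
    ⟨fun h => ⟨_, hne.csInf_mem hfin, h⟩,
      fun ⟨x, hx, hxr⟩ => (csInf_le hfin.bddBelow hx).trans hxr⟩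
  rw [show discreteFrechetDist q s = sInf S from rfl, hle]
  constructor
  · rintro ⟨_, ⟨T, hT, rfl⟩, hTr⟩
    exact ⟨T, hT, fun p hp => (List.foldr_max_le_iff.1 hTr).2 _ (List.mem_map_of_mem hp)⟩
  · rintro ⟨T, hT, hTr⟩
    exact ⟨_, ⟨T, hT, rfl⟩, List.foldr_max_le_iff.2 ⟨hr, List.forall_mem_map.2 hTr⟩⟩

theorem Shatters.two_pow_card_le {X β : Type*} {R : Set (Set X)} {Y : Finset X}
    (hY : Shatters R Y) (𝒜 : Finset β) (Φ : β → Set Y)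
    (hR : ∀ B ∈ R, ∃ P ∈ 𝒜, ∀ y : Y, (y : X) ∈ B ↔ y ∈ Φ P) :
    2 ^ #Y ≤ #𝒜 := by
  classical
  have hsurj : Set.SurjOn (fun P => (Φ P).toFinset) 𝒜 (univ : Finset (Finset Y)) := by
    intro A _
    obtain ⟨B, hB, hBA⟩ := hY (A.map (Function.Embedding.subtype _)) fun x hx => by
      obtain ⟨y, -, rfl⟩ := mem_map.1 hx
      exact y.2
    obtain ⟨P, hP, hPB⟩ := hR B hB
    refine ⟨P, hP, ?_⟩
    ext y
    simp [← hPB, hBA y y.2]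
  simpa using card_le_card_of_surjOn _ hsurj

theorem card_le_finrank_of_forall_exists_dual {α E : Type*} [AddCommGroup E] [Module ℝ E]
    [FiniteDimensional ℝ E] (v : α → E) (s : Finset α)
    (hs : ∀ A ⊆ s, ∃ f : Module.Dual ℝ E, ∀ x ∈ s, f (v x) ≤ 0 ↔ x ∈ A) :
    #s ≤ finrank ℝ E := by
  classical
  by_contra! hlt
  have hdep : ¬ LinearIndepOn ℝ v (s : Set α) := fun h =>
    hlt.not_ge (by simpa using h.fintype_card_le_finrank)
  obtain ⟨g, hg, x₀, hx₀, hgx₀⟩ := not_linearIndepOn_finset_iff.1 hdep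
  -- The functional realising `A = {g ≤ 0}` makes every term of `∑ g x * f (v x) = 0`
  -- nonnegative and the term at `x₀` positive.
  wlog hpos : 0 < g x₀ generalizing g
  · exact this (-g) (by simp [sum_neg_distrib, hg]) (neg_ne_zero.2 hgx₀)
      (neg_pos.2 ((not_lt.1 hpos).lt_of_ne hgx₀))
  obtain ⟨f, hf⟩ := hs (s.filter fun x => g x ≤ 0) (filter_subset _ _)
  have hf_pos : ∀ x ∈ s, 0 < g x → 0 < f (v x) := fun x hx hgx =>
    not_le.1 fun h => hgx.not_ge (mem_filter.1 ((hf x hx).1 h)).2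
  have hterm : ∀ x ∈ s, 0 ≤ g x * f (v x) := by
    intro x hx
    rcases le_or_gt (g x) 0 with hgx | hgx
    · exact mul_nonneg_of_nonpos_of_nonpos hgx ((hf x hx).2 (mem_filter.2 ⟨hx, hgx⟩))
    · exact (mul_pos hgx (hf_pos x hx hgx)).le
  have hsum : ∑ x ∈ s, g x * f (v x) = 0 := by
    simpa using congrArg f hg
  exact (sum_pos' hterm ⟨x₀, hx₀, mul_pos hpos (hf_pos x₀ hx₀ hpos)⟩).ne' hsum

theorem Finset.vcDim_le_finrank {α E : Type*} [DecidableEq α] [AddCommGroup E] [Module ℝ E]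
    [FiniteDimensional ℝ E] (v : α → E) (𝒜 : Finset (Finset α))
    (h𝒜 : ∀ u ∈ 𝒜, ∃ f : Module.Dual ℝ E, ∀ x, x ∈ u ↔ f (v x) ≤ 0) :
    𝒜.vcDim ≤ finrank ℝ E :=
  Finset.sup_le fun s hs => card_le_finrank_of_forall_exists_dual v s fun _ hA => by
    obtain ⟨u, hu, hsu⟩ := mem_shatterer.1 hs hA
    obtain ⟨f, hf⟩ := h𝒜 u hu
    exact ⟨f, fun x hx => by rw [← hf, ← hsu, mem_inter, and_iff_right hx]⟩

theorem Nat.sum_Iic_choose_le_add_one_pow (N v : ℕ) :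
    ∑ i ∈ Iic v, N.choose i ≤ (N + 1) ^ v := by
  rw [← Nat.range_succ_eq_Iic, add_pow]
  refine sum_le_sum fun i hi => ?_
  rw [one_pow, mul_one]
  exact (Nat.choose_le_pow N i).trans
    (Nat.le_mul_of_pos_right _ (Nat.choose_pos (Nat.lt_succ_iff.1 (mem_range.1 hi))))

theorem Finset.card_le_add_one_pow_vcDim {α : Type*} [Fintype α] [DecidableEq α]
    (𝒜 : Finset (Finset α)) : #𝒜 ≤ (Fintype.card α + 1) ^ 𝒜.vcDim :=
  (card_le_card_shatterer 𝒜).trans <|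
    card_shatterer_le_sum_vcDim.trans (Nat.sum_Iic_choose_le_add_one_pow _ _)

theorem Finset.card_le_add_one_pow_finrank {α E : Type*} [Fintype α] [AddCommGroup E]
    [Module ℝ E] [FiniteDimensional ℝ E] (v : α → E) (𝒜 : Finset (Finset α))
    (h𝒜 : ∀ u ∈ 𝒜, ∃ f : Module.Dual ℝ E, ∀ x, x ∈ u ↔ f (v x) ≤ 0) :
    #𝒜 ≤ (Fintype.card α + 1) ^ finrank ℝ E := by
  classical
  exact 𝒜.card_le_add_one_pow_vcDim.trans
    (Nat.pow_le_pow_right (Nat.succ_pos _) (𝒜.vcDim_le_finrank v h𝒜))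

section Lift

variable {d k : ℕ}

/- `‖q i - x‖² - r² = ‖q i‖² - 2 ⟪q i, x⟫ + ‖x‖² - r²` is a sum of products of a factor depending
only on `(q, r)` and a factor depending only on `(i, x)`; the two lifts collect these factors. -/

noncomputable def sqDistLift (i : Fin k) (x : EuclideanSpace ℝ (Fin d)) :
    Fin k × Option (Fin d) ⊕ Bool → ℝ :=
  Sum.elim (fun a => if a.1 = i then a.2.elim 1 x else 0) fun b => if b then ‖x‖ ^ 2 else 1

noncomputable def sqDistDualLift (q : Fin k → EuclideanSpace ℝ (Fin d)) (r : ℝ) :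
    Fin k × Option (Fin d) ⊕ Bool → ℝ :=
  Sum.elim (fun a => a.2.elim (‖q a.1‖ ^ 2) fun l => -2 * q a.1 l)
    fun b => if b then 1 else -r ^ 2

theorem sqDistDualLift_dotProduct_sqDistLift (q : Fin k → EuclideanSpace ℝ (Fin d)) (r : ℝ)
    (i : Fin k) (x : EuclideanSpace ℝ (Fin d)) :
    sqDistDualLift q r ⬝ᵥ sqDistLift i x = dist (q i) x ^ 2 - r ^ 2 := by
  have hinner : inner ℝ (q i) x = ∑ l, q i l * x l := by
    simp [PiLp.inner_apply, mul_comm]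
  rw [dist_eq_norm, norm_sub_sq_real, hinner, mul_sum]
  simp [dotProduct, sqDistLift, sqDistDualLift, Fintype.sum_sum_type, Fintype.sum_prod_type,
    Fintype.sum_option, mul_assoc, sub_eq_add_neg, add_assoc]

end Lift

section Patterns

variable {d m : ℕ} (Y : Finset (Fin m → EuclideanSpace ℝ (Fin d)))

noncomputable def ballPattern {k : ℕ} (q : Fin k → EuclideanSpace ℝ (Fin d)) (r : ℝ) :
    Finset ((Fin k × Fin m) × Y) :=
  {a | dist (q a.1.1) ((a.2 : Fin m → EuclideanSpace ℝ (Fin d)) a.1.2) ≤ r}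

open scoped Classical in
noncomputable def ballPatterns (k : ℕ) : Finset (Finset ((Fin k × Fin m) × Y)) :=
  {P | ∃ q r, 0 < r ∧ ballPattern Y q r = P}

theorem card_ballPatterns_le (k : ℕ) :
    #(ballPatterns Y k) ≤ (k * m * #Y + 1) ^ (k * (d + 1) + 2) := by
  have h := card_le_add_one_pow_finrank
    (fun a : (Fin k × Fin m) × Y =>
      sqDistLift a.1.1 ((a.2 : Fin m → EuclideanSpace ℝ (Fin d)) a.1.2))
    (ballPatterns Y k) ?_
  · simpa [finrank_fintype_fun_eq_card] using h
  intro P hP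
  classical
  obtain ⟨q, r, hr, rfl⟩ := (mem_filter.1 hP).2
  refine ⟨dotProductEquiv ℝ _ (sqDistDualLift q r), fun a => ?_⟩
  simp [ballPattern, sqDistDualLift_dotProduct_sqDistLift, pow_le_pow_iff_left₀ dist_nonneg hr.le]

theorem two_pow_card_le_of_shatters {k : ℕ} (hk : 0 < k) (hm : 0 < m)
    (hY : Shatters {B | ∃ (q : Fin k → EuclideanSpace ℝ (Fin d)) (r : ℝ), 0 < r ∧
      B = {s | discreteFrechetDist q s ≤ r}} Y) :
    2 ^ #Y ≤ (k * m * #Y + 1) ^ (k * (d + 1) + 2) := by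
  refine (hY.two_pow_card_le (ballPatterns Y k)
    (fun P => {y | ∃ T : List (Fin k × Fin m), IsTraversal T ∧ ∀ p ∈ T, (p, y) ∈ P})
    ?_).trans (card_ballPatterns_le Y k)
  classical
  rintro _ ⟨q, r, hr, rfl⟩
  refine ⟨ballPattern Y q r, mem_filter.2 ⟨mem_univ _, q, r, hr, rfl⟩, fun y => ?_⟩
  simp [discreteFrechetDist_le_iff hk hm q _ hr.le, ballPattern]

end Patterns

open Real in
theorem natCast_le_of_two_pow_le_mul_add_one_pow {a b n : ℕ} (ha : 1 ≤ a) (hb : 1 ≤ b)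
    (h : 2 ^ n ≤ (a * n + 1) ^ b) : (n : ℝ) ≤ 3 * b * (1 + log (a * b)) := by
  have ha' : (1 : ℝ) ≤ a := by exact_mod_cast ha
  have hb' : (1 : ℝ) ≤ b := by exact_mod_cast hb
  have hlog_ab : log (a * b) = log a + log b := log_mul (by positivity) (by positivity)
  have hla : 0 ≤ log a := log_nonneg ha'
  have hlb : 0 ≤ log b := log_nonneg hb'
  rcases Nat.eq_zero_or_pos n with rfl | hn
  · rw [hlog_ab, Nat.cast_zero]
    positivity
  have hn' : (1 : ℝ) ≤ n := by exact_mod_cast hn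
  have hL : 0.6931471803 < log 2 := log_two_gt_d9
  have hL' : log 2 < 0.6931471808 := log_two_lt_d9
  have h_take_log : n * log 2 ≤ b * log (a * n + 1) := by
    have hcast : (2 : ℝ) ^ n ≤ (a * n + 1) ^ b := by exact_mod_cast h
    simpa [log_pow] using log_le_log (by positivity) hcast
  have h_log_an : log (a * n + 1) ≤ log 2 + log a + log n := by
    rw [← log_mul (by norm_num) (by positivity), ← log_mul (by positivity) (by positivity)]
    exact log_le_log (by positivity) (by nlinarith)
  -- `log n` is absorbed by the left-hand side: `log x ≤ x - 1` at `x = n / (4 b)`.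
  have h_log_n : log n ≤ n / (4 * b) - 1 + (2 * log 2 + log b) := by
    have := log_le_sub_one_of_pos (show (0 : ℝ) < n / (4 * b) by positivity)
    rw [log_div (by positivity) (by positivity), log_mul (by norm_num) (by positivity),
      show (4 : ℝ) = 2 ^ 2 by norm_num, log_pow] at this
    push_cast at this
    linarith
  have h_absorb : (b : ℝ) * (n / (4 * b)) = n / 4 := by field_simp
  have key : n * (log 2 - 1 / 4) ≤ b * (3 * log 2 - 1 + log a + log b) := by
    nlinarith [mul_le_mul_of_nonneg_left (h_log_an.trans (add_le_add_right h_log_n _))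
      (by positivity : (0 : ℝ) ≤ b)]
  rw [hlog_ab]
  nlinarith [mul_nonneg (by positivity : (0 : ℝ) ≤ b) (add_nonneg hla hlb)]

open Real in
theorem natCast_le_mul_one_add_log_of_two_pow_le {d k m n : ℕ}
    (hd : 1 ≤ d) (hk : 1 ≤ k) (hm : 1 ≤ m)
    (h : 2 ^ n ≤ (k * m * n + 1) ^ (k * (d + 1) + 2)) :
    (n : ℝ) ≤ 36 * d * k * (1 + log (d * k * m)) := by
  have hb : k * (d + 1) + 2 ≤ 4 * d * k := by nlinarith
  have hab : k * m * (k * (d + 1) + 2) ≤ 4 * (d * k * m) ^ 2 := by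
    have hk_le : k ≤ d * k * m := by nlinarith [Nat.mul_le_mul hd hm]
    calc k * m * (k * (d + 1) + 2) ≤ (d * k * m) * m * (4 * d * k) := by gcongr
      _ ≤ 4 * (d * k * m) ^ 2 := by nlinarith
  have hab_pos : 0 < k * m * (k * (d + 1) + 2) := by positivity
  have hL : log 2 < 0.6931471808 := log_two_lt_d9
  have hX : 0 ≤ log (d * k * m) := log_nonneg (by norm_cast; nlinarith [Nat.mul_le_mul hd hk])
  have hdk : (0 : ℝ) ≤ d * k := by positivity
  calc (n : ℝ)
      ≤ 3 * ((k * (d + 1) + 2 : ℕ) : ℝ) * (1 + log ((k * m : ℕ) * (k * (d + 1) + 2 : ℕ))) :=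
        natCast_le_of_two_pow_le_mul_add_one_pow (Nat.mul_pos hk hm) (by omega) h
    _ ≤ 3 * (4 * d * k) * (1 + log (4 * (d * k * m) ^ 2)) := by
        gcongr 3 * ?_ * (1 + ?_)
        · exact add_nonneg zero_le_one (log_nonneg (by exact_mod_cast hab_pos))
        · exact_mod_cast hb
        · exact log_le_log (by exact_mod_cast hab_pos) (by exact_mod_cast hab)
    _ = 12 * (d * k) * (1 + 2 * log 2 + 2 * log (d * k * m)) := by
        rw [log_mul (by norm_num) (by positivity), log_pow, show (4 : ℝ) = 2 ^ 2 by norm_num,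
          log_pow]
        push_cast
        ring
    _ ≤ 36 * d * k * (1 + log (d * k * m)) := by nlinarith [mul_nonneg hdk hX]

/-- VC dimension of discrete-Fréchet metric balls on `m`-tuples of points of `ℝ^d`,
with centers of complexity `k`, is `O(d k log (d k m))`. -/
theorem vc_discrete_frechet_upper :
    ∃ C : ℝ, 0 < C ∧ ∀ d k m : ℕ, 1 ≤ d → 1 ≤ k → 1 ≤ m →
      ∀ Y : Finset (Fin m → EuclideanSpace ℝ (Fin d)),
        Shatters {B | ∃ (q : Fin k → EuclideanSpace ℝ (Fin d)) (r : ℝ), 0 < r ∧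
            B = {s | discreteFrechetDist q s ≤ r}} Y →
        (Y.card : ℝ) ≤ C * d * k * (1 + Real.log ((d : ℝ) * k * m)) :=
  ⟨36, by norm_num, fun _ _ _ hd hk hm Y hY =>
    natCast_le_mul_one_add_log_of_two_pow_le hd hk hm
      (two_pow_card_le_of_shatters Y hk hm hY)⟩
end

section
/- Let d ≥ 1, r ≥ 0, let m ≥ 2 and let s₁, …, s_m ∈ ℝ^d be the vertices of the polygonal curve S = ⋃_{1 ≤ j ≤ m−1} [s_j, s_{j+1}], and let q₁, q₂ ∈ ℝ^d with q₁ ≠ q₂. Then every point of the segment [q₁, q₂] lies within Euclidean distance r of the set S (i.e. the directed Hausdorff distance from [q₁,q₂] to S is at most r) if and only if there exist v ≥ 1 and indices j₁, …, j_v ∈ {1, …, m−1} such that: infDist(q₁, [s_{j₁}, s_{j₁+1}]) ≤ r; infDist(q₂, [s_{j_v}, s_{j_v+1}]) ≤ r; and for every 1 ≤ i ≤ v−1 the line ℓ(q₁,q₂) = { q₁ + x·(q₂−q₁) | x ∈ ℝ } has nonempty intersection with D_r([s_{j_i}, s_{j_i+1}]) ∩ D_r([s_{j_{i+1}}, s_{j_{i+1}+1}]).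 -/
open Metric Set

lemma chain_cover : ∀ (n : ℕ) (a : ℕ → ℝ) (t : ℝ), 1 ≤ n →
    min (a 0) (a n) ≤ t → t ≤ max (a 0) (a n) →
    ∃ i, i + 1 ≤ n ∧ min (a i) (a (i+1)) ≤ t ∧ t ≤ max (a i) (a (i+1)) := by
  intro n
  induction n with
  | zero => omega
  | succ n ih =>
    intro a t _ h1 h2
    rcases Nat.eq_zero_or_pos n with hn0 | hn0
    · subst hn0; exact ⟨0, le_refl 1, h1, h2⟩
    by_cases hb : min (a 0) (a 1) ≤ t ∧ t ≤ max (a 0) (a 1)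
    · exact ⟨0, by omega, hb.1, hb.2⟩
    · have key : min (a 1) (a (n+1)) ≤ t ∧ t ≤ max (a 1) (a (n+1)) := by
        rcases le_total (a 1) t with h | h
        · constructor
          · exact min_le_of_left_le h
          · by_contra hc
            push_neg at hc
            rw [max_lt_iff] at hc
            have ha0 : t ≤ a 0 := by
              rcases le_max_iff.mp h2 with h' | h'
              · exact h'
              · linarith [hc.2]
            exact hb ⟨min_le_of_right_le h, le_max_of_le_left ha0⟩
        · constructor
          · by_contra hc
            push_neg at hc
            rw [lt_min_iff] at hc
            have ha0 : a 0 ≤ t := by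
              rcases min_le_iff.mp h1 with h' | h'
              · exact h'
              · linarith [hc.2]
            exact hb ⟨min_le_of_left_le ha0, le_max_of_le_right h⟩
          · exact le_max_of_le_left h
      obtain ⟨i, hi, hmin, hmax⟩ := ih (fun k => a (k+1)) t hn0 key.1 key.2
      exact ⟨i + 1, by omega, hmin, hmax⟩

lemma mem_cthick_iff {α : Type*} [PseudoMetricSpace α] {E : Set α} (hE : E.Nonempty)
    {r : ℝ} (hr : 0 ≤ r) (x : α) : x ∈ cthickening r E ↔ infDist x E ≤ r := by
  rw [Metric.mem_cthickening_iff, Metric.infDist,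
    ENNReal.le_ofReal_iff_toReal_le (Metric.infEdist_ne_top hE) hr]



/-- The line through `q₁` and `q₂` (supporting the segment from `q₁` to `q₂`). -/
def lineThrough {d : ℕ} (s t : EuclideanSpace ℝ (Fin d)) :
    Set (EuclideanSpace ℝ (Fin d)) :=
  {p | ∃ x : ℝ, p = s + x • (t - s)}

/-- The `i`-th edge of the polygonal curve with vertex sequence `s`:
the closed segment from `s i` to `s (i+1)` (0-indexed). -/
def edge {d m : ℕ} (s : Fin m → EuclideanSpace ℝ (Fin d)) (i : Fin (m - 1)) :
    Set (EuclideanSpace ℝ (Fin d)) :=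
  segment ℝ (s ⟨i.1, by have := i.2; omega⟩) (s ⟨i.1 + 1, by have := i.2; omega⟩)

/-- The stadium of radius `r` around a set: its closed `r`-neighborhood. -/
def stadiumOf {d : ℕ} (r : ℝ) (e : Set (EuclideanSpace ℝ (Fin d))) :
    Set (EuclideanSpace ℝ (Fin d)) :=
  Metric.cthickening r e

/-- Characterization of when every point of a segment `[q₁, q₂]` lies within distance `r`
of a polygonal curve `S` with vertices `s₁, …, s_m`: this holds if and only if there
is a finite sequence of edges of `S` whose first (resp. last) edge is within distance `r`
of `q₁` (resp. `q₂`), and such that the line through `q₁` and `q₂` meets the double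
stadium of every two consecutive edges of the sequence. -/
theorem segment_within_r_iff_edge_sequence
    (d m : ℕ) (hd : 1 ≤ d) (hm : 2 ≤ m) (r : ℝ) (hr : 0 ≤ r)
    (s : Fin m → EuclideanSpace ℝ (Fin d))
    (q₁ q₂ : EuclideanSpace ℝ (Fin d)) (hq : q₁ ≠ q₂) :
    (∀ x ∈ segment ℝ q₁ q₂, Metric.infDist x (⋃ i : Fin (m - 1), edge s i) ≤ r) ↔
      ∃ (v : ℕ) (hv : 1 ≤ v) (j : Fin v → Fin (m - 1)),
        Metric.infDist q₁ (edge s (j ⟨0, hv⟩)) ≤ r ∧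
        Metric.infDist q₂ (edge s (j ⟨v - 1, by omega⟩)) ≤ r ∧
        ∀ (i : ℕ) (h : i + 1 < v),
          (lineThrough q₁ q₂ ∩
            (stadiumOf r (edge s (j ⟨i, by omega⟩)) ∩
              stadiumOf r (edge s (j ⟨i + 1, h⟩)))).Nonempty := by
  classical
  have hEne : ∀ k : Fin (m-1), (edge s k).Nonempty := fun k => ⟨_, left_mem_segment ℝ _ _⟩
  have hEcompact : ∀ k : Fin (m-1), IsCompact (edge s k) := by
    intro k
    rw [edge, segment_eq_image]
    exact isCompact_Icc.image (by fun_prop)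
  have hm1 : 0 < m - 1 := by omega
  have hUne : (⋃ i : Fin (m-1), edge s i).Nonempty :=
    ⟨(hEne ⟨0, hm1⟩).choose, mem_iUnion.2 ⟨⟨0, hm1⟩, (hEne ⟨0, hm1⟩).choose_spec⟩⟩
  have hnear : ∀ x, Metric.infDist x (⋃ i : Fin (m-1), edge s i) ≤ r →
      ∃ k, Metric.infDist x (edge s k) ≤ r := by
    intro x hx
    obtain ⟨y, hy, hdy⟩ := (isCompact_iUnion fun i => hEcompact i).exists_infDist_eq_dist hUne x
    obtain ⟨k, hk⟩ := mem_iUnion.mp hy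
    exact ⟨k, (Metric.infDist_le_dist_of_mem hk).trans (hdy ▸ hx)⟩
  have hrev : ∀ x (k : Fin (m-1)), Metric.infDist x (edge s k) ≤ r →
      Metric.infDist x (⋃ i : Fin (m-1), edge s i) ≤ r :=
    fun x k h => (Metric.infDist_le_infDist_of_subset (subset_iUnion _ k) (hEne k)).trans h
  set f : ℝ → EuclideanSpace ℝ (Fin d) := fun t => q₁ + t • (q₂ - q₁) with hf
  have hfc : Continuous f := by fun_prop
  have hfseg : segment ℝ q₁ q₂ = f '' Icc (0:ℝ) 1 := segment_eq_image' ℝ q₁ q₂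
  have hfL : ∀ t, f t ∈ lineThrough q₁ q₂ := fun t => ⟨t, rfl⟩
  have hf0 : f 0 = q₁ := by simp [hf]
  have hf1 : f 1 = q₂ := by simp [hf]
  have hstad : ∀ (x) (k : Fin (m-1)),
      x ∈ stadiumOf r (edge s k) ↔ Metric.infDist x (edge s k) ≤ r :=
    fun x k => mem_cthick_iff (hEne k) hr x
  have hTconv : ∀ k : Fin (m-1), Convex ℝ (stadiumOf r (edge s k)) :=
    fun k => (convex_segment _ _).cthickening r
  have hfaff : ∀ (a b t₁ t₂ : ℝ), a + b = 1 →
      f (a*t₁+b*t₂) = a • f t₁ + b • f t₂ := by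
    intro a b t₁ t₂ hab
    have hb : b = 1 - a := by linarith
    subst hb
    simp only [hf]
    module
  have hTconv' : ∀ k : Fin (m-1), Convex ℝ {t : ℝ | f t ∈ stadiumOf r (edge s k)} := by
    intro k t₁ h₁ t₂ h₂ a b ha hb hab
    simp only [Set.mem_setOf_eq] at h₁ h₂ ⊢
    rw [smul_eq_mul, smul_eq_mul, hfaff a b t₁ t₂ hab]
    exact hTconv k h₁ h₂ ha hb hab
  constructor
  · -- forward
    intro hseg
    set Good : Fin (m-1) → Prop := fun k =>
      ∃ (v : ℕ) (hv : 1 ≤ v) (j : Fin v → Fin (m-1)),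
        j ⟨v-1, by omega⟩ = k ∧
        Metric.infDist q₁ (edge s (j ⟨0, hv⟩)) ≤ r ∧
        ∀ (i : ℕ) (h : i + 1 < v),
          (lineThrough q₁ q₂ ∩
            (stadiumOf r (edge s (j ⟨i, by omega⟩)) ∩
              stadiumOf r (edge s (j ⟨i+1, h⟩)))).Nonempty with hGood
    have hbase : ∀ k, Metric.infDist q₁ (edge s k) ≤ r → Good k := by
      intro k hk
      exact ⟨1, le_refl 1, fun _ => k, rfl, hk, fun i h => absurd h (by omega)⟩
    have happend : ∀ k k', Good k →
        (lineThrough q₁ q₂ ∩ (stadiumOf r (edge s k) ∩ stadiumOf r (edge s k'))).Nonempty →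
        Good k' := by
      rintro k k' ⟨v, hv, j, hlast, hfirst, hmid⟩ hnew
      refine ⟨v+1, by omega, fun i => if h : i.1 < v then j ⟨i.1, h⟩ else k', ?_, ?_, ?_⟩
      · show (if h : v+1-1 < v then j ⟨v+1-1, h⟩ else k') = k'
        rw [dif_neg (by omega)]
      · show Metric.infDist q₁ (edge s (if h : (0:ℕ) < v then j ⟨0, h⟩ else k')) ≤ r
        rw [dif_pos (show 0 < v by omega)]
        exact hfirst
      · intro i h
        show (lineThrough q₁ q₂ ∩
            (stadiumOf r (edge s (if h : i < v then j ⟨i, h⟩ else k')) ∩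
              stadiumOf r (edge s (if h' : i+1 < v then j ⟨i+1, h'⟩ else k')))).Nonempty
        by_cases hiv : i + 1 < v
        · rw [dif_pos (by omega : i < v), dif_pos hiv]
          exact hmid i hiv
        · rw [dif_pos (by omega : i < v), dif_neg hiv]
          have he : (⟨i, by omega⟩ : Fin v) = ⟨v-1, by omega⟩ := Fin.ext (by simp; omega)
          rw [he, hlast]
          exact hnew
    set C : Fin (m-1) → Set ℝ := fun k => {t | Metric.infDist (f t) (edge s k) ≤ r} with hC
    have hCc : ∀ k, IsClosed (C k) :=
      fun k => isClosed_le ((continuous_infDist_pt _).comp hfc) continuous_const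
    set U : Set ℝ := ⋃ k ∈ {k | Good k}, C k with hU
    set V : Set ℝ := ⋃ k ∈ {k | ¬ Good k}, C k with hV
    have hUc : IsClosed U := Set.Finite.isClosed_biUnion (Set.toFinite _) fun k _ => hCc k
    have hVc : IsClosed V := Set.Finite.isClosed_biUnion (Set.toFinite _) fun k _ => hCc k
    have hcov : Icc (0:ℝ) 1 ⊆ U ∪ V := by
      intro t ht
      obtain ⟨k, hk⟩ := hnear (f t) (hseg (f t) (by rw [hfseg]; exact mem_image_of_mem f ht))
      by_cases hg : Good k
      · exact Or.inl (mem_biUnion hg hk)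
      · exact Or.inr (mem_biUnion hg hk)
    have h0U : (0:ℝ) ∈ U := by
      obtain ⟨k, hk⟩ := hnear q₁ (hseg q₁ (left_mem_segment ℝ q₁ q₂))
      refine mem_biUnion (hbase k hk) ?_
      show Metric.infDist (f 0) (edge s k) ≤ r
      rw [hf0]; exact hk
    have hVempty : ¬ (Icc (0:ℝ) 1 ∩ V).Nonempty := by
      intro hne
      obtain ⟨t, htI, htU, htV⟩ := isPreconnected_closed_iff.mp isPreconnected_Icc U V hUc hVc
        hcov ⟨0, ⟨le_refl 0, zero_le_one⟩, h0U⟩ hne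
      obtain ⟨k, hkG, hk⟩ := mem_iUnion₂.mp htU
      obtain ⟨k', hkG', hk'⟩ := mem_iUnion₂.mp htV
      exact hkG' (happend k k' hkG
        ⟨f t, hfL t, (hstad _ _).mpr hk, (hstad _ _).mpr hk'⟩)
    have h1U : (1:ℝ) ∈ U := by
      rcases hcov ⟨zero_le_one, le_refl 1⟩ with h | h
      · exact h
      · exact absurd ⟨1, ⟨zero_le_one, le_refl 1⟩, h⟩ hVempty
    obtain ⟨k, hkG, hk⟩ := mem_iUnion₂.mp h1U
    have hq2 : Metric.infDist q₂ (edge s k) ≤ r := by rw [← hf1]; exact hk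
    obtain ⟨v, hv, j, hlast, hfirst, hmid⟩ := hkG
    refine ⟨v, hv, j, hfirst, ?_, hmid⟩
    rw [show (⟨v-1, by omega⟩ : Fin v) = ⟨v-1, by omega⟩ from rfl, hlast]
    exact hq2
  · -- backward
    rintro ⟨v, hv, j, h1, h2, hmeet⟩ x hx
    rw [hfseg] at hx
    obtain ⟨t, ht, rfl⟩ := hx
    have hpt : ∀ (i : ℕ) (_ : i + 1 < v), ∃ y : ℝ,
        f y ∈ stadiumOf r (edge s (j ⟨i, by omega⟩)) ∧
        f y ∈ stadiumOf r (edge s (j ⟨i+1, by omega⟩)) := by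
      intro i h
      obtain ⟨p, hpL, hp1, hp2⟩ := hmeet i h
      obtain ⟨y, rfl⟩ := hpL
      exact ⟨y, hp1, hp2⟩
    choose! g hg1 hg2 using hpt
    set a : ℕ → ℝ := fun k => if k = 0 then 0 else if k < v then g (k-1) else 1 with ha
    have ha0 : a 0 = 0 := by simp [ha]
    have hav : a v = 1 := by
      simp only [ha]
      rw [if_neg (by omega), if_neg (lt_irrefl v)]
    have key : ∀ (i : ℕ) (hi : i < v),
        f (a i) ∈ stadiumOf r (edge s (j ⟨i, hi⟩)) ∧
        f (a (i+1)) ∈ stadiumOf r (edge s (j ⟨i, hi⟩)) := by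
      intro i hi
      constructor
      · rcases Nat.eq_zero_or_pos i with h0 | h0
        · subst h0
          rw [ha0, hf0]
          exact (hstad q₁ _).mpr h1
        · have hval : a i = g (i-1) := by
            simp only [ha]
            rw [if_neg (by omega), if_pos hi]
          rw [hval]
          have h2' := hg2 (i-1) (by omega)
          have he : (⟨i-1+1, by omega⟩ : Fin v) = ⟨i, hi⟩ := Fin.ext (by simp; omega)
          rwa [he] at h2'
      · by_cases hlt : i + 1 < v
        · have hval : a (i+1) = g i := by
            simp only [ha]
            rw [if_neg (by omega), if_pos hlt]
            norm_num
          rw [hval]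
          exact hg1 i hlt
        · have hieq : i + 1 = v := by omega
          have hval : a (i+1) = 1 := by
            simp only [ha]
            rw [if_neg (by omega), if_neg (by omega)]
          rw [hval, hf1]
          have he : (⟨v-1, by omega⟩ : Fin v) = ⟨i, hi⟩ := Fin.ext (by simp; omega)
          rw [← he]
          exact (hstad q₂ _).mpr h2
    have key2 : ∀ (i : ℕ) (hi : i < v), ∀ u : ℝ,
        min (a i) (a (i+1)) ≤ u → u ≤ max (a i) (a (i+1)) →
        f u ∈ stadiumOf r (edge s (j ⟨i, hi⟩)) := by
      intro i hi u hu1 hu2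
      have hc := (hTconv' (j ⟨i, hi⟩)).ordConnected
      rcases le_total (a i) (a (i+1)) with h | h
      · exact hc.out (key i hi).1 (key i hi).2
          ⟨by rwa [min_eq_left h] at hu1, by rwa [max_eq_right h] at hu2⟩
      · exact hc.out (key i hi).2 (key i hi).1
          ⟨by rwa [min_eq_right h] at hu1, by rwa [max_eq_left h] at hu2⟩
    obtain ⟨i, hi, hmin, hmax⟩ := chain_cover v a t hv
      (by rw [ha0, hav, min_eq_left zero_le_one]; exact ht.1)
      (by rw [ha0, hav, max_eq_right zero_le_one]; exact ht.2)
    exact hrev (f t) _ ((hstad _ _).mp (key2 i (by omega) t hmin hmax))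
end

section
/- For every integer k ≥ 1 there exist k distinct points p₁, …, p_k ∈ ℝ² such that the set {p₁, …, p_k} is shattered by the family of Hausdorff metric balls centered at k-point sets: for every subset A ⊆ {1, …, k} there exist a tuple q : Fin k → ℝ² and a radius r > 0 such that for every i ∈ {1, …, k}, the Hausdorff distance between the singleton {p_i} and the finite set {q₁, …, q_k} is at most r if and only if i ∈ A. Consequently, the VC dimension of the range space on ℝ² whose ranges are Hausdorff metric balls centered at k-point sets is at least k. -/
/-!
Put the points `p i` on the unit circle and, for a target set `A`, take the centers
`q j = 0` for `j ∈ A` and `q j = -p j` for `j ∉ A`. The Hausdorff distance from `{p i}` to a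
finite set is the largest distance from `p i` to one of its points. For `i ∉ A` it is `2`,
attained at the antipode `-p i`; for `i ∈ A` every distance is `1` or `‖p i + p j‖` with
`j ≠ i`, which is `< 2` by strict convexity of the norm. So any radius between the largest of
these finitely many values and `2` separates `A` from its complement.
-/

open Metric Set

theorem Set.Finite.exists_le_lt_forall_le {β α : Type*} [LinearOrder α] {s : Set β}
    (hs : s.Finite) {f : β → α} {a c : α} (ha : a < c) (hf : ∀ x ∈ s, f x < c) :
    ∃ r, a ≤ r ∧ r < c ∧ ∀ x ∈ s, f x ≤ r := by
  rcases s.eq_empty_or_nonempty with rfl | hne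
  · exact ⟨a, le_rfl, ha, by simp⟩
  · obtain ⟨x₀, hx₀, hmax⟩ := exists_max_image s f hs hne
    exact ⟨max a (f x₀), le_max_left _ _, max_lt ha (hf x₀ hx₀),
      fun x hx => (hmax x hx).trans (le_max_right _ _)⟩

theorem Metric.hausdorffDist_singleton_range_le_iff {α ι : Type*} [PseudoMetricSpace α]
    [Finite ι] {x : α} {q : ι → α} {r : ℝ} (hr : 0 ≤ r) :
    hausdorffDist {x} (range q) ≤ r ↔ ∀ j, dist x (q j) ≤ r := by
  rcases isEmpty_or_nonempty ι with _ | ⟨⟨j₀⟩⟩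
  · simp [range_eq_empty, hr]
  have : Nonempty ι := ⟨j₀⟩
  have hfin : hausdorffEDist (range q) {x} ≠ ⊤ :=
    hausdorffEDist_ne_top_of_nonempty_of_bounded (range_nonempty q) (singleton_nonempty x)
      (finite_range q).isBounded Bornology.isBounded_singleton
  refine ⟨fun h j => ?_, fun h => ?_⟩
  · calc dist x (q j) = infDist (q j) {x} := by rw [infDist_singleton, dist_comm]
      _ ≤ hausdorffDist (range q) {x} := infDist_le_hausdorffDist_of_mem (mem_range_self j) hfin
      _ ≤ r := hausdorffDist_comm (s := {x}) ▸ h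
  · refine hausdorffDist_le_of_mem_dist hr ?_ ?_
    · rintro _ rfl
      exact ⟨q j₀, mem_range_self j₀, h j₀⟩
    · rintro _ ⟨j, rfl⟩
      exact ⟨x, rfl, dist_comm x (q j) ▸ h j⟩

theorem Metric.sphere_infinite {E : Type*} [NormedAddCommGroup E] [NormedSpace ℝ E]
    (h : 1 < Module.rank ℝ E) (x : E) {r : ℝ} (hr : 0 < r) : (sphere x r).Infinite := by
  have : Nontrivial E := rank_pos_iff_nontrivial.1 (zero_lt_one.trans h)
  obtain ⟨y, hy⟩ : (sphere x r).Nonempty := NormedSpace.sphere_nonempty.2 hr.le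
  have hyx : y - x ≠ 0 := sub_ne_zero.2 (ne_of_mem_sphere hy hr.ne')
  refine (isPreconnected_sphere h x r).infinite_of_nontrivial
    ⟨y, hy, x - (y - x), ?_, fun hxy => hyx ?_⟩
  · simpa [dist_eq_norm, norm_sub_rev] using hy
  · exact (smul_eq_zero.1 (by rw [two_smul]; nth_rewrite 1 [hxy]; abel :
      (2 : ℝ) • (y - x) = 0)).resolve_left two_ne_zero

def Metric.HausdorffBallsShatter {α ι : Type*} [PseudoMetricSpace α] (p : ι → α) : Prop :=
  ∀ A : Set ι, ∃ (q : ι → α) (r : ℝ), 0 < r ∧ ∀ i, hausdorffDist {p i} (range q) ≤ r ↔ i ∈ A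

theorem Metric.hausdorffBallsShatter_of_mem_sphere {E ι : Type*} [NormedAddCommGroup E]
    [NormedSpace ℝ E] [StrictConvexSpace ℝ E] [Finite ι] {p : ι → E} (hp : Function.Injective p)
    (hp₁ : ∀ i, p i ∈ sphere (0 : E) 1) : HausdorffBallsShatter p := by
  classical
  intro A
  have hnorm (i : ι) : ‖p i‖ = 1 := mem_sphere_zero_iff_norm.1 (hp₁ i)
  set q : ι → E := fun j => if j ∈ A then 0 else -p j
  have hq (j : ι) (hj : j ∉ A) : q j = -p j := if_neg hj
  have hfar (i : ι) (hi : i ∉ A) : dist (p i) (q i) = 2 := by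
    rw [dist_eq_norm, hq i hi, sub_neg_eq_add, ← two_smul ℝ, norm_smul, hnorm]
    norm_num
  have hnear : ∀ ij ∈ A ×ˢ univ, dist (p ij.1) (q ij.2) < 2 := by
    rintro ⟨i, j⟩ ⟨hi, -⟩
    by_cases hj : j ∈ A
    · simp [q, hj, hnorm]
    · rw [dist_eq_norm, hq j hj, sub_neg_eq_add]
      have hij : ¬SameRay ℝ (p i) (p j) :=
        (not_sameRay_iff_of_norm_eq ((hnorm i).trans (hnorm j).symm)).2
          (hp.ne (ne_of_mem_of_not_mem hi hj))
      simpa [hnorm, one_add_one_eq_two] using norm_add_lt_of_not_sameRay hij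
  obtain ⟨r, h1r, hr2, hr⟩ := (toFinite (A ×ˢ univ)).exists_le_lt_forall_le one_lt_two hnear
  refine ⟨q, r, one_pos.trans_le h1r, fun i => ?_⟩
  rw [hausdorffDist_singleton_range_le_iff (zero_le_one.trans h1r)]
  exact ⟨fun h => by_contra fun hi => ((h i).trans_lt hr2).ne (hfar i hi),
    fun hi j => hr (i, j) ⟨hi, trivial⟩⟩

theorem vc_hausdorff_lower_k_general (k : ℕ) :
    ∃ p : Fin k → EuclideanSpace ℝ (Fin 2), Function.Injective p ∧
      ∀ A : Finset (Fin k),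
        ∃ (q : Fin k → EuclideanSpace ℝ (Fin 2)) (r : ℝ), 0 < r ∧
          ∀ i : Fin k,
            (Metric.hausdorffDist ({p i} : Set (EuclideanSpace ℝ (Fin 2)))
                (Set.range q) ≤ r ↔ i ∈ A) := by
  have hrank : 1 < Module.rank ℝ (EuclideanSpace ℝ (Fin 2)) := by
    rw [← Module.finrank_eq_rank, finrank_euclideanSpace, Fintype.card_fin]
    norm_num
  let e := (sphere_infinite hrank 0 one_pos).natEmbedding
  let p : Fin k → EuclideanSpace ℝ (Fin 2) := fun i => e i
  have hp : Function.Injective p :=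
    Subtype.val_injective.comp (e.injective.comp Fin.val_injective)
  refine ⟨p, hp, fun A => ?_⟩
  simpa using hausdorffBallsShatter_of_mem_sphere hp (fun i => (e i).2) A

/-- There are `k` distinct points of `ℝ²` shattered by the family of Hausdorff metric
balls centered at `k`-point sets: for every subset `A` of the index set there are a
center tuple `q` and a radius `r > 0` such that `p i` lies in the corresponding
Hausdorff ball exactly when `i ∈ A`. Hence the VC dimension of this range space
is at least `k`. -/
theorem vc_hausdorff_lower_k (k : ℕ) (hk : 1 ≤ k) :
    ∃ p : Fin k → EuclideanSpace ℝ (Fin 2), Function.Injective p ∧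
      ∀ A : Finset (Fin k),
        ∃ (q : Fin k → EuclideanSpace ℝ (Fin 2)) (r : ℝ), 0 < r ∧
          ∀ i : Fin k,
            (Metric.hausdorffDist ({p i} : Set (EuclideanSpace ℝ (Fin 2)))
                (Set.range q) ≤ r ↔ i ∈ A) :=
  vc_hausdorff_lower_k_general k
end

section
/- There exists an absolute constant c > 0 such that for every integer m ≥ 2 there exist an integer t with t ≥ c·log m and t tuples S₁, …, S_t : Fin m → ℝ² such that the set {S₁, …, S_t} is shattered by the family of Hausdorff metric balls centered at single points: for every subset A ⊆ {1, …, t} there exist a point p ∈ ℝ² and a radius r > 0 such that for every i ∈ {1, …, t}, the Hausdorff distance between the finite point set {(S_i)₁, …, (S_i)_m} and the singleton {p} is at most r if and only if i ∈ A. Consequently, the VC dimension of the range space on m-tuples of points of ℝ² whose ranges are Hausdorff metric balls (with centers of any fixed complexity k ≥ 1) is Ω(log m). -/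
/-!
Index points of the unit circle injectively by the subsets `B` of `{1, …, t}` and let the
`i`-th tuple list the points indexed by the subsets avoiding `i`; with `m ≥ 2^t` entries every
such subset can be listed. The Hausdorff distance from a finite set to `{p}` is the largest
distance of its points to `p`. By strict convexity, the point antipodal to the one indexed by `A`
is at distance exactly `2` from it and at distance `< 2` from every other point of the circle,
so a ball of radius slightly below `2` around it contains the `i`-th set exactly when that set
avoids the point indexed by `A`, i.e. when `i ∈ A`. Taking `t = ⌊log₂ m⌋` gives the bound.
-/

open Metric Function

theorem Metric.hausdorffDist_singleton_le_iff {α : Type*} [PseudoMetricSpace α] {s : Set α}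
    {p : α} {r : ℝ} (hs : s.Nonempty) (hb : Bornology.IsBounded s) :
    hausdorffDist s {p} ≤ r ↔ ∀ x ∈ s, dist x p ≤ r := by
  have hfin : hausdorffEDist s {p} ≠ ⊤ :=
    hausdorffEDist_ne_top_of_nonempty_of_bounded hs (Set.singleton_nonempty p) hb
      Bornology.isBounded_singleton
  refine ⟨fun h x hx => ?_, fun h => ?_⟩
  · simpa only [infDist_singleton] using (infDist_le_hausdorffDist_of_mem hx hfin).trans h
  · obtain ⟨x, hx⟩ := hs
    refine hausdorffDist_le_of_mem_dist (dist_nonneg.trans (h x hx))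
      (fun y hy => ⟨p, rfl, h y hy⟩) fun q hq => ⟨x, hx, ?_⟩
    rw [Set.mem_singleton_iff.1 hq, dist_comm]
    exact h x hx

theorem Finite.exists_upper_bound_mem_Ioo {β : Type*} [Finite β] {f : β → ℝ} {a : ℝ}
    (ha : 0 < a) (hf : ∀ b, f b < a) : ∃ r ∈ Set.Ioo 0 a, ∀ b, f b ≤ r := by
  cases isEmpty_or_nonempty β
  · exact ⟨a / 2, ⟨by positivity, by linarith⟩, isEmptyElim⟩
  · obtain ⟨b₀, hb₀⟩ := Finite.exists_max f
    exact ⟨max (f b₀) (a / 2), ⟨by positivity, max_lt (hf b₀) (by linarith)⟩,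
      fun b => (hb₀ b).trans (le_max_left _ _)⟩

theorem Function.injective_of_forall_finset_exists_iff {ι α β : Type*} [DecidableEq ι]
    {S : ι → α} {P : β → α → Prop} (h : ∀ A : Finset ι, ∃ b, ∀ i, P b (S i) ↔ i ∈ A) :
    Injective S := by
  intro i j hij
  obtain ⟨b, hb⟩ := h {i}
  exact (Finset.mem_singleton.1 ((hb j).1 (hij ▸ (hb i).2 (Finset.mem_singleton_self i)))).symm

theorem Set.range_finset_erase (ι : Type*) [DecidableEq ι] (i : ι) :
    Set.range (fun B : Finset ι => B.erase i) = {B | i ∉ B} := by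
  ext B
  refine ⟨?_, fun hB => ⟨B, Finset.erase_eq_of_notMem hB⟩⟩
  rintro ⟨C, rfl⟩
  exact Finset.notMem_erase i C

section NormedSpace

variable {E : Type*} [NormedAddCommGroup E] [NormedSpace ℝ E]

theorem infinite_unit_sphere (h : 1 < Module.rank ℝ E) : (sphere (0 : E) 1).Infinite := by
  have : PreconnectedSpace (sphere (0 : E) 1) :=
    isPreconnected_iff_preconnectedSpace.1 (isConnected_sphere h 0 zero_le_one).isPreconnected
  have : Nontrivial E := (rank_pos_iff_nontrivial (R := ℝ)).1 (zero_lt_one.trans h)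
  obtain ⟨x, hx⟩ := (NormedSpace.sphere_nonempty (x := (0 : E))).2 zero_le_one
  have : Nontrivial (sphere (0 : E) 1) :=
    nontrivial_of_ne ⟨x, hx⟩ _ (ne_neg_of_mem_unit_sphere ℝ ⟨x, hx⟩)
  exact Set.infinite_coe_iff.1 PreconnectedSpace.infinite

theorem exists_injective_norm_eq_one (ι : Type*) [Countable ι] (h : 1 < Module.rank ℝ E) :
    ∃ u : ι → E, Injective u ∧ ∀ i, ‖u i‖ = 1 := by
  have := (infinite_unit_sphere h).to_subtype
  obtain ⟨f, hf⟩ := Countable.exists_injective_nat ι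
  refine ⟨fun i => Infinite.natEmbedding (sphere (0 : E) 1) (f i), ?_, fun i => ?_⟩
  · exact Subtype.val_injective.comp ((Infinite.natEmbedding _).injective.comp hf)
  · exact mem_sphere_zero_iff_norm.1 (Infinite.natEmbedding (sphere (0 : E) 1) (f i)).2

variable [StrictConvexSpace ℝ E]

theorem norm_add_lt_two_of_ne {x y : E} (hx : ‖x‖ = 1) (hy : ‖y‖ = 1) (hxy : x ≠ y) :
    ‖x + y‖ < 2 := by
  have := norm_add_lt_of_not_sameRay fun h => hxy (h.eq_of_norm_eq (hx.trans hy.symm))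
  linarith

theorem exists_hausdorffDist_image_le_iff_mem {ι : Type*} [Finite ι] {u : Finset ι → E}
    (hu : Injective u) (hnorm : ∀ B, ‖u B‖ = 1) (A : Finset ι) :
    ∃ (p : E) (r : ℝ), 0 < r ∧ ∀ i, hausdorffDist (u '' {B | i ∉ B}) {p} ≤ r ↔ i ∈ A := by
  set p := -u A
  have hdist : ∀ B, dist (u B) p = ‖u B + u A‖ := fun B => by
    rw [dist_eq_norm, sub_neg_eq_add]
  have hdist_A : dist (u A) p = 2 := by
    rw [hdist, ← two_smul ℝ, norm_smul, hnorm]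
    norm_num
  obtain ⟨r, ⟨hr₀, hr₂⟩, hr⟩ := Finite.exists_upper_bound_mem_Ioo
    (f := fun B : {B // B ≠ A} => dist (u B) p) two_pos
    fun B => hdist B ▸ norm_add_lt_two_of_ne (hnorm _) (hnorm _) (hu.ne B.2)
  refine ⟨p, r, hr₀, fun i => ?_⟩
  rw [hausdorffDist_singleton_le_iff (Set.Nonempty.image u ⟨∅, Finset.notMem_empty i⟩)
    (Set.toFinite _).isBounded, Set.forall_mem_image]
  refine ⟨fun h => by_contra fun hi => (h hi).not_gt (hdist_A ▸ hr₂), fun hi B hB => ?_⟩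
  exact hr ⟨B, by rintro rfl; exact hB hi⟩

end NormedSpace

theorem Real.log_le_two_mul_log_two_mul_natLog {m : ℕ} (hm : 2 ≤ m) :
    Real.log m ≤ 2 * Real.log 2 * Nat.log 2 m := by
  have ht : (1 : ℝ) ≤ Nat.log 2 m := by exact_mod_cast Nat.log_pos one_lt_two hm
  have hm' : (m : ℝ) < 2 ^ (Nat.log 2 m + 1) := by
    exact_mod_cast Nat.lt_pow_succ_log_self one_lt_two m
  calc Real.log m ≤ Real.log (2 ^ (Nat.log 2 m + 1)) :=
        Real.log_le_log (by positivity) hm'.le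
    _ = (Nat.log 2 m + 1) * Real.log 2 := by push_cast [Real.log_pow]; ring
    _ ≤ 2 * Real.log 2 * Nat.log 2 m := by nlinarith [Real.log_pos one_lt_two]

/-- For every `m ≥ 2` there are `t = Ω(log m)` distinct `m`-tuples of points of `ℝ²`
shattered by the family of Hausdorff metric balls centered at single points: for every
subset `A` of the index set there are a center point `p` and a radius `r > 0` such that
the `i`-th point set lies in the corresponding Hausdorff ball exactly when `i ∈ A`.
Hence the VC dimension of the range space of Hausdorff metric balls on `m`-tuples
is `Ω(log m)`. -/
theorem vc_hausdorff_lower_log_m :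
    ∃ c : ℝ, 0 < c ∧ ∀ m : ℕ, 2 ≤ m →
      ∃ t : ℕ, c * Real.log m ≤ (t : ℝ) ∧
        ∃ S : Fin t → (Fin m → EuclideanSpace ℝ (Fin 2)), Function.Injective S ∧
          ∀ A : Finset (Fin t),
            ∃ (p : EuclideanSpace ℝ (Fin 2)) (r : ℝ), 0 < r ∧
              ∀ i : Fin t,
                (Metric.hausdorffDist (Set.range (S i))
                    ({p} : Set (EuclideanSpace ℝ (Fin 2))) ≤ r ↔ i ∈ A) := by
  refine ⟨1 / (2 * Real.log 2), by positivity, fun m hm => ⟨Nat.log 2 m, ?_, ?_⟩⟩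
  · rw [div_mul_eq_mul_div, one_mul, div_le_iff₀ (by positivity)]
    linarith [Real.log_le_two_mul_log_two_mul_natLog hm]
  set t := Nat.log 2 m
  obtain ⟨u, hu, hnorm⟩ := exists_injective_norm_eq_one (Finset (Fin t))
    (E := EuclideanSpace ℝ (Fin 2))
    (by rw [← Module.finrank_eq_rank, finrank_euclideanSpace_fin]; norm_num)
  obtain ⟨f⟩ := Function.Embedding.nonempty_of_card_le (α := Finset (Fin t)) (β := Fin m)
    (by simpa using Nat.pow_log_le_self 2 (by omega : m ≠ 0))
  set S : Fin t → Fin m → EuclideanSpace ℝ (Fin 2) := fun i j => u ((invFun f j).erase i)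
  have hrange : ∀ i, Set.range (S i) = u '' {B | i ∉ B} := fun i => by
    rw [← Set.range_finset_erase, ← Set.range_comp]
    exact (invFun_surjective f.injective).range_comp (u ∘ fun B => B.erase i)
  have hshatter (A : Finset (Fin t)) :
      ∃ p r, 0 < r ∧ ∀ i, hausdorffDist (Set.range (S i)) {p} ≤ r ↔ i ∈ A := by
    simpa only [hrange] using exists_hausdorffDist_image_le_iff_mem hu hnorm A
  refine ⟨S, injective_of_forall_finset_exists_iff
    (P := fun (q : EuclideanSpace ℝ (Fin 2) × ℝ) X => hausdorffDist (Set.range X) {q.1} ≤ q.2)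
    fun A => ?_, hshatter⟩
  obtain ⟨p, r, -, h⟩ := hshatter A
  exact ⟨(p, r), h⟩
end

section
/- There exists an absolute constant c > 0 such that for all integers k ≥ 1 and m ≥ 2 the following two statements hold for the range space whose ground set is the set of m-tuples of points of ℝ² (viewed as parametrized polygonal curves) and whose ranges are the Fréchet metric balls { s : Fin m → ℝ² | d_F(γ_s, γ_q) ≤ r } over all tuples q : Fin k → ℝ² and radii r > 0. (a) There exist k tuples S₁, …, S_k : Fin m → ℝ² forming a set shattered by this family of ranges; (b) there exist an integer t ≥ c·log m and t tuples T₁, …, T_t : Fin m → ℝ² forming a set shattered by this family of ranges. Consequently, the VC dimension of this range space is Ω(max(k, log m)). -/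
/-- The uniform piecewise-linear parametrization of the polygonal curve with vertex
sequence `s : Fin m → ℝ^d`, as a map defined on `[0,1] ⊆ ℝ`: for `m ≥ 2` it satisfies
`param s ((i + t)/(m-1)) = (1-t) • s i + t • s (i+1)` for `0 ≤ i ≤ m-2` and `t ∈ [0,1]`
(indices 0-based); for `m = 1` it is the constant map with value `s 0`. -/
noncomputable def param {d m : ℕ} (s : Fin m → EuclideanSpace ℝ (Fin d)) (α : ℝ) :
    EuclideanSpace ℝ (Fin d) :=
  if h2 : 2 ≤ m then
    let x : ℝ := α * ((m : ℝ) - 1)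
    let i : ℕ := min ⌊x⌋₊ (m - 2)
    (1 - (x - (i : ℝ))) • s ⟨i, by omega⟩ + (x - (i : ℝ)) • s ⟨i + 1, by omega⟩
  else if h1 : 1 ≤ m then s ⟨0, by omega⟩ else 0

/-- The (continuous) Fréchet distance between two parametrized curves `γ σ : [0,1] → ℝ^d`:
the infimum over pairs of continuous nondecreasing reparametrizations
`f g : [0,1] → [0,1]` with `f 0 = g 0 = 0` and `f 1 = g 1 = 1` of
`sup_{α ∈ [0,1]} dist (γ (f α)) (σ (g α))`. -/
noncomputable def frechetDist {d : ℕ} (γ σ : ℝ → EuclideanSpace ℝ (Fin d)) : ℝ :=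
  sInf {x | ∃ f g : ℝ → ℝ,
    ContinuousOn f (Set.Icc 0 1) ∧ ContinuousOn g (Set.Icc 0 1) ∧
    MonotoneOn f (Set.Icc 0 1) ∧ MonotoneOn g (Set.Icc 0 1) ∧
    Set.MapsTo f (Set.Icc 0 1) (Set.Icc 0 1) ∧ Set.MapsTo g (Set.Icc 0 1) (Set.Icc 0 1) ∧
    f 0 = 0 ∧ g 0 = 0 ∧ f 1 = 1 ∧ g 1 = 1 ∧
    x = ⨆ α : Set.Icc (0 : ℝ) 1, dist (γ (f α)) (σ (g α))}

/-- The weak Fréchet distance: as the Fréchet distance, but the reparametrizations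
`f, g` are only required to be continuous (not monotone). -/
noncomputable def weakFrechetDist {d : ℕ} (γ σ : ℝ → EuclideanSpace ℝ (Fin d)) : ℝ :=
  sInf {x | ∃ f g : ℝ → ℝ,
    ContinuousOn f (Set.Icc 0 1) ∧ ContinuousOn g (Set.Icc 0 1) ∧
    Set.MapsTo f (Set.Icc 0 1) (Set.Icc 0 1) ∧ Set.MapsTo g (Set.Icc 0 1) (Set.Icc 0 1) ∧
    f 0 = 0 ∧ g 0 = 0 ∧ f 1 = 1 ∧ g 1 = 1 ∧
    x = ⨆ α : Set.Icc (0 : ℝ) 1, dist (γ (f α)) (σ (g α))}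

/-! Against a constant curve, the Fréchet distance of a polygonal curve is its largest vertex
distance, because every segment stays inside any ball containing its endpoints. On the rational
points `circlePoint 0, …, circlePoint M` of the unit circle, `-circlePoint a` is within
`circleRadius M < 2` of every point except its antipode `circlePoint a`. For (a), the constant
curve at `circlePoint i` lies in the ball around the curve whose `l`-th vertex is `0` for `l ∈ A`
and `-circlePoint l` otherwise. For (b), index the `2 ^ t ≤ m` subsets of `Fin t` injectively by
vertices; the `j`-th curve has `circlePoint m` at the index `code A` of each `A ∋ j` and
`circlePoint i` at any other index `i`, so the ball around the constant curve at
`-circlePoint (code A)` contains exactly the curves `j ∈ A`. -/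

open Set

section Frechet

variable {d : ℕ}

theorem frechetDist_comm (γ σ : ℝ → EuclideanSpace ℝ (Fin d)) :
    frechetDist γ σ = frechetDist σ γ := by
  unfold frechetDist
  congr 1
  ext x
  constructor <;>
  · rintro ⟨f, g, hfc, hgc, hfm, hgm, hfM, hgM, hf0, hg0, hf1, hg1, rfl⟩
    exact ⟨g, f, hgc, hfc, hgm, hfm, hgM, hfM, hg0, hf0, hg1, hf1, by simp only [dist_comm]⟩

theorem iSup_Icc_comp_eq {F f : ℝ → ℝ} (hfc : ContinuousOn f (Icc 0 1))
    (hfM : MapsTo f (Icc 0 1) (Icc 0 1)) (hf0 : f 0 = 0) (hf1 : f 1 = 1) :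
    ⨆ α : Icc (0 : ℝ) 1, F (f α) = ⨆ α : Icc (0 : ℝ) 1, F α := by
  have hsurj : SurjOn f (Icc 0 1) (Icc 0 1) := by
    simpa only [SurjOn, hf0, hf1] using intermediate_value_Icc zero_le_one hfc
  rw [iSup, iSup, ← image_eq_range (fun x => F (f x)), ← image_eq_range, ← image_image,
    hsurj.image_eq_of_mapsTo hfM]

theorem frechetDist_const_right (γ : ℝ → EuclideanSpace ℝ (Fin d))
    (p : EuclideanSpace ℝ (Fin d)) :
    frechetDist γ (fun _ => p) = ⨆ α : Icc (0 : ℝ) 1, dist (γ α) p := by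
  unfold frechetDist
  rw [← csInf_singleton (⨆ α : Icc (0 : ℝ) 1, dist (γ α) p)]
  congr 1
  ext x
  constructor
  · rintro ⟨f, -, hfc, -, -, -, hfM, -, hf0, -, hf1, -, rfl⟩
    exact iSup_Icc_comp_eq (F := fun x => dist (γ x) p) hfc hfM hf0 hf1
  · rintro rfl
    exact ⟨id, id, continuousOn_id, continuousOn_id, monotoneOn_id, monotoneOn_id,
      mapsTo_id _, mapsTo_id _, rfl, rfl, rfl, rfl, rfl⟩

end Frechet

section Param

variable {d m : ℕ}

theorem param_const (hm : 1 ≤ m) (p : EuclideanSpace ℝ (Fin d)) :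
    param (fun _ : Fin m => p) = fun _ => p := by
  funext α
  unfold param
  split_ifs
  · rw [← add_smul, sub_add_cancel, one_smul]
  · rfl

theorem param_mem_convexHull (hm : 1 ≤ m) (s : Fin m → EuclideanSpace ℝ (Fin d)) {α : ℝ}
    (hα : α ∈ Icc 0 1) : param s α ∈ convexHull ℝ (range s) := by
  unfold param
  split_ifs with h2
  · set x := α * ((m : ℝ) - 1)
    set i := min ⌊x⌋₊ (m - 2)
    have hm2 : (2 : ℝ) ≤ m := by exact_mod_cast h2
    have hx0 : 0 ≤ x := mul_nonneg hα.1 (by linarith)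
    have hi_le : (i : ℝ) ≤ x := (Nat.cast_le.2 (min_le_left _ _)).trans (Nat.floor_le hx0)
    have hx_le : x ≤ i + 1 := by
      rcases min_choice ⌊x⌋₊ (m - 2) with hi | hi
      · rw [show i = ⌊x⌋₊ from hi]
        exact (Nat.lt_floor_add_one x).le
      · rw [show i = m - 2 from hi, Nat.cast_sub h2]
        push_cast
        nlinarith [hα.2]
    refine segment_subset_convexHull (mem_range_self _) (mem_range_self _)
      ⟨1 - (x - i), x - i, by linarith, by linarith, by ring, rfl⟩
  · exact subset_convexHull ℝ _ (mem_range_self _)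

theorem exists_param_eq (hm : 1 ≤ m) (s : Fin m → EuclideanSpace ℝ (Fin d)) (i : Fin m) :
    ∃ α ∈ Icc 0 1, param s α = s i := by
  by_cases h2 : 2 ≤ m
  · have hm1 : (0 : ℝ) < m - 1 := by
      have : (2 : ℝ) ≤ m := by exact_mod_cast h2
      linarith
    have hi : (i : ℝ) ≤ m - 1 := by
      have : (i : ℝ) + 1 ≤ m := by exact_mod_cast i.isLt
      linarith
    refine ⟨i / (m - 1), ⟨by positivity, (div_le_one hm1).2 hi⟩, ?_⟩
    rw [param, dif_pos h2]
    simp only [div_mul_cancel₀ _ hm1.ne', Nat.floor_natCast]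
    rcases Nat.lt_or_ge i (m - 1) with hlt | hge
    · simp only [min_eq_left (by omega : (i : ℕ) ≤ m - 2), sub_self, sub_zero, one_smul,
        zero_smul, add_zero]
    · have hi' : (i : ℕ) = m - 2 + 1 := by omega
      have hcast : (i : ℝ) - ((m - 2 : ℕ) : ℝ) = 1 := by
        rw [hi', Nat.cast_add_one]
        ring
      simp only [min_eq_right (by omega : m - 2 ≤ (i : ℕ)), hcast, sub_self, zero_smul,
        one_smul, zero_add]
      congr 1
      exact Fin.ext hi'.symm
  · refine ⟨0, left_mem_Icc.2 zero_le_one, ?_⟩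
    rw [param, dif_neg h2, dif_pos hm]
    congr 1
    ext
    omega

theorem forall_param_mem_iff (hm : 1 ≤ m) (s : Fin m → EuclideanSpace ℝ (Fin d))
    {C : Set (EuclideanSpace ℝ (Fin d))} (hC : Convex ℝ C) :
    (∀ α ∈ Icc (0 : ℝ) 1, param s α ∈ C) ↔ ∀ i, s i ∈ C := by
  refine ⟨fun h i => ?_, fun h α hα => ?_⟩
  · obtain ⟨α, hα, hαi⟩ := exists_param_eq hm s i
    exact hαi ▸ h α hα
  · exact (hC.convexHull_subset_iff.2 (range_subset_iff.2 h)) (param_mem_convexHull hm s hα)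

theorem frechetDist_param_const_le_iff (hm : 1 ≤ m) (s : Fin m → EuclideanSpace ℝ (Fin d))
    (p : EuclideanSpace ℝ (Fin d)) (r : ℝ) :
    frechetDist (param s) (fun _ => p) ≤ r ↔ ∀ i, dist (s i) p ≤ r := by
  have hbdd : BddAbove (range fun α : Icc (0 : ℝ) 1 => dist (param s α) p) := by
    have hR : ∀ i, s i ∈ Metric.closedBall p (∑ j, dist (s j) p) := fun i =>
      Finset.single_le_sum (fun j _ => dist_nonneg) (Finset.mem_univ i)
    rw [← forall_param_mem_iff hm s (convex_closedBall _ _)] at hR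
    exact ⟨_, forall_mem_range.2 fun α => hR α α.2⟩
  rw [frechetDist_const_right, ciSup_le_iff hbdd, Subtype.forall]
  exact forall_param_mem_iff hm s (convex_closedBall p r)

end Param

noncomputable def circlePoint (n : ℕ) : EuclideanSpace ℝ (Fin 2) :=
  !₂[(1 - (n : ℝ) ^ 2) / (1 + (n : ℝ) ^ 2), 2 * n / (1 + (n : ℝ) ^ 2)]

theorem norm_circlePoint (n : ℕ) : ‖circlePoint n‖ = 1 := by
  have hpos : (0 : ℝ) < 1 + (n : ℝ) ^ 2 := by positivity
  rw [EuclideanSpace.norm_eq, Real.sqrt_eq_one, Fin.sum_univ_two]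
  simp only [circlePoint, PiLp.toLp_apply, Matrix.cons_val_zero, Matrix.cons_val_one,
    Real.norm_eq_abs, sq_abs]
  field_simp
  ring

theorem dist_circlePoint_neg_sq (n a : ℕ) :
    dist (circlePoint n) (-circlePoint a) ^ 2 =
      4 - 4 * ((n : ℝ) - a) ^ 2 / ((1 + (n : ℝ) ^ 2) * (1 + (a : ℝ) ^ 2)) := by
  have hn : (0 : ℝ) < 1 + (n : ℝ) ^ 2 := by positivity
  have ha : (0 : ℝ) < 1 + (a : ℝ) ^ 2 := by positivity
  rw [EuclideanSpace.dist_eq, Real.sq_sqrt (by positivity), Fin.sum_univ_two]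
  simp only [circlePoint, PiLp.neg_apply, PiLp.toLp_apply, Matrix.cons_val_zero,
    Matrix.cons_val_one, Real.dist_eq, sq_abs]
  field_simp
  ring

-- With `ε = 1 / (1 + M ^ 2) ^ 2`, the square `(2 - ε) ^ 2` exceeds `4 - 4 ε`, which bounds
-- `dist (circlePoint n) (-circlePoint a) ^ 2` for distinct `n, a ≤ M`.
noncomputable def circleRadius (M : ℕ) : ℝ := 2 - 1 / (1 + (M : ℝ) ^ 2) ^ 2

theorem one_le_circleRadius (M : ℕ) : 1 ≤ circleRadius M := by
  have : 1 / (1 + (M : ℝ) ^ 2) ^ 2 ≤ 1 := div_le_one_of_le₀ (by nlinarith) (by positivity)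
  unfold circleRadius
  linarith

theorem dist_circlePoint_neg_le_circleRadius_iff {n a M : ℕ} (hn : n ≤ M) (ha : a ≤ M) :
    dist (circlePoint n) (-circlePoint a) ≤ circleRadius M ↔ n ≠ a := by
  rw [← sq_le_sq₀ dist_nonneg (zero_le_one.trans (one_le_circleRadius M)),
    dist_circlePoint_neg_sq, circleRadius]
  set ε := 1 / (1 + (M : ℝ) ^ 2) ^ 2
  have hε : 0 < ε := by positivity
  have hε1 : ε ≤ 1 := div_le_one_of_le₀ (by nlinarith) (by positivity)
  constructor
  · rintro h rfl
    simp only [sub_self, ne_eq, OfNat.ofNat_ne_zero, not_false_eq_true, zero_pow, mul_zero,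
      zero_div, sub_zero] at h
    nlinarith
  · intro hna
    have hgap : 1 ≤ ((n : ℝ) - a) ^ 2 := by
      rcases Nat.lt_or_gt_of_ne hna with h | h
      · have : (n : ℝ) + 1 ≤ a := by exact_mod_cast h
        nlinarith
      · have : (a : ℝ) + 1 ≤ n := by exact_mod_cast h
        nlinarith
    have hden : (1 + (n : ℝ) ^ 2) * (1 + (a : ℝ) ^ 2) ≤ (1 + (M : ℝ) ^ 2) ^ 2 := by
      have hn' : (n : ℝ) ≤ M := by exact_mod_cast hn
      have ha' : (a : ℝ) ≤ M := by exact_mod_cast ha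
      rw [sq (1 + (M : ℝ) ^ 2)]
      exact mul_le_mul (by gcongr) (by gcongr) (by positivity) (by positivity)
    have hD : (0 : ℝ) < (1 + (n : ℝ) ^ 2) * (1 + (a : ℝ) ^ 2) := by positivity
    have : ε ≤ ((n : ℝ) - a) ^ 2 / ((1 + (n : ℝ) ^ 2) * (1 + (a : ℝ) ^ 2)) :=
      calc ε ≤ 1 / ((1 + (n : ℝ) ^ 2) * (1 + (a : ℝ) ^ 2)) := one_div_le_one_div_of_le hD hden
        _ ≤ _ := div_le_div_of_nonneg_right hgap hD.le
    rw [mul_div_assoc]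
    nlinarith

section Shattering

variable {d m : ℕ} {ι : Type*}

def FrechetBallsShatter (k : ℕ) (S : ι → Fin m → EuclideanSpace ℝ (Fin d)) : Prop :=
  ∀ A : Finset ι, ∃ (q : Fin k → EuclideanSpace ℝ (Fin d)) (r : ℝ), 0 < r ∧
    ∀ i, (frechetDist (param (S i)) (param q) ≤ r ↔ i ∈ A)

theorem FrechetBallsShatter.injective {k : ℕ} {S : ι → Fin m → EuclideanSpace ℝ (Fin d)}
    (h : FrechetBallsShatter k S) : Function.Injective S := by
  intro i j hij
  obtain ⟨q, r, -, hqr⟩ := h {j}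
  simpa [hij, hqr] using hqr i

theorem frechetBallsShatter_const_circlePoint {k : ℕ} (hk : 1 ≤ k) (hm : 1 ≤ m) :
    FrechetBallsShatter k fun (i : Fin k) (_ : Fin m) => circlePoint i := by
  intro A
  refine ⟨fun l => if l ∈ A then 0 else -circlePoint l, circleRadius k,
    zero_lt_one.trans_le (one_le_circleRadius k), fun i => ?_⟩
  rw [param_const hm, frechetDist_comm, frechetDist_param_const_le_iff hk]
  have hball : ∀ l : Fin k, dist (if l ∈ A then 0 else -circlePoint l) (circlePoint i) ≤
      circleRadius k ↔ (l ∉ A → i ≠ l) := by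
    intro l
    split_ifs with hl
    · simpa [hl, norm_circlePoint] using one_le_circleRadius k
    · rw [dist_comm, dist_circlePoint_neg_le_circleRadius_iff i.isLt.le l.isLt.le,
        Fin.val_ne_iff]
      tauto
  simp only [hball]
  exact ⟨fun h => by_contra fun hi => h i hi rfl, fun hi l hl hil => hl (hil ▸ hi)⟩

open Classical in
noncomputable def codeCurve (code : Finset ι → Fin m) (j : ι) (i : Fin m) :
    EuclideanSpace ℝ (Fin 2) :=
  if ∃ A, j ∈ A ∧ code A = i then circlePoint m else circlePoint i

theorem codeCurve_eq_or (code : Finset ι → Fin m) (j : ι) (i : Fin m) :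
    codeCurve code j i = circlePoint m ∨ codeCurve code j i = circlePoint i := by
  unfold codeCurve
  split_ifs <;> simp

open Classical in
theorem codeCurve_code {code : Finset ι → Fin m} (hcode : Function.Injective code) (j : ι)
    (A : Finset ι) :
    codeCurve code j (code A) = if j ∈ A then circlePoint m else circlePoint (code A) := by
  simp only [codeCurve, hcode.eq_iff, exists_eq_right]

theorem frechetBallsShatter_codeCurve {k : ℕ} (hk : 1 ≤ k) {code : Finset ι → Fin m}
    (hcode : Function.Injective code) : FrechetBallsShatter k (codeCurve code) := by
  have hm : 1 ≤ m := Fin.pos (code ∅)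
  intro A
  set a : Fin m := code A
  refine ⟨fun _ => -circlePoint a, circleRadius m,
    zero_lt_one.trans_le (one_le_circleRadius m), fun j => ?_⟩
  rw [param_const hk, frechetDist_param_const_le_iff hm]
  have hfar : ∀ {n : ℕ}, n ≤ m → n ≠ a →
      dist (circlePoint n) (-circlePoint a) ≤ circleRadius m :=
    fun hn hna => (dist_circlePoint_neg_le_circleRadius_iff hn a.isLt.le).2 hna
  constructor
  · intro h
    by_contra hj
    have ha := h a
    rw [codeCurve_code hcode, if_neg hj,
      dist_circlePoint_neg_le_circleRadius_iff a.isLt.le a.isLt.le] at ha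
    exact ha rfl
  · intro hj i
    by_cases hi : i = a
    · rw [hi, codeCurve_code hcode, if_pos hj]
      exact hfar le_rfl a.isLt.ne'
    · rcases codeCurve_eq_or code j i with h | h <;> rw [h]
      · exact hfar le_rfl a.isLt.ne'
      · exact hfar i.isLt.le (Fin.val_ne_iff.2 hi)

end Shattering

theorem half_log_le_natLog_two {m : ℕ} (hm : 2 ≤ m) : 1 / 2 * Real.log m ≤ Nat.log 2 m := by
  have ht : (1 : ℝ) ≤ Nat.log 2 m := by exact_mod_cast Nat.log_pos one_lt_two hm
  have hlt : (m : ℝ) < 2 ^ (Nat.log 2 m + 1) := by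
    exact_mod_cast Nat.lt_pow_succ_log_self one_lt_two m
  have hlog : Real.log m < (Nat.log 2 m + 1) * Real.log 2 := by
    simpa using Real.log_lt_log (by positivity) hlt
  nlinarith [Real.log_two_lt_d9, Real.log_pos one_lt_two]

/-- Lower bounds for Fréchet metric balls on polygonal curves in `ℝ²`: (a) there are `k`
distinct `m`-tuples shattered by the Fréchet balls with centers of complexity `k`, and
(b) there are `t = Ω(log m)` distinct `m`-tuples shattered by this family. Hence the
VC dimension of this range space is `Ω(max (k, log m))`. -/
theorem vc_frechet_lower :
    ∃ c : ℝ, 0 < c ∧ ∀ k m : ℕ, 1 ≤ k → 2 ≤ m →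
      (∃ S : Fin k → (Fin m → EuclideanSpace ℝ (Fin 2)), Function.Injective S ∧
        ∀ A : Finset (Fin k),
          ∃ (q : Fin k → EuclideanSpace ℝ (Fin 2)) (r : ℝ), 0 < r ∧
            ∀ i : Fin k, (frechetDist (param (S i)) (param q) ≤ r ↔ i ∈ A)) ∧
      (∃ t : ℕ, c * Real.log m ≤ (t : ℝ) ∧
        ∃ T : Fin t → (Fin m → EuclideanSpace ℝ (Fin 2)), Function.Injective T ∧
          ∀ A : Finset (Fin t),
            ∃ (q : Fin k → EuclideanSpace ℝ (Fin 2)) (r : ℝ), 0 < r ∧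
              ∀ i : Fin t, (frechetDist (param (T i)) (param q) ≤ r ↔ i ∈ A)) := by
  refine ⟨1 / 2, one_half_pos, fun k m hk hm => ⟨?_, ?_⟩⟩
  · have hS := frechetBallsShatter_const_circlePoint (m := m) hk (by omega)
    exact ⟨_, hS.injective, hS⟩
  · obtain ⟨code⟩ : Nonempty (Finset (Fin (Nat.log 2 m)) ↪ Fin m) :=
      Function.Embedding.nonempty_of_card_le <| by
        simpa using Nat.pow_log_le_self 2 (by omega : m ≠ 0)
    have hT := frechetBallsShatter_codeCurve hk code.injective
    exact ⟨_, half_log_le_natLog_two hm, _, hT.injective, hT⟩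
end
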